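/- arXiv:2306.10349 — 9 statements merged into one kernel-verified Lean document; each statement's English description precedes it below -/
import Mathlib

section
/- Let β > 0 and 0 < V₀ < 1/(2√β), and let T(ℏ) be the period function of the autonomous comb-drive equation. Then T(ℏ) tends to 2π/√(1 − 4βV₀²) as ℏ tends to 0 from the right (limit along (0, ℏ*)). -/
set_option maxHeartbeats 1000000

open MeasureTheory intervalIntegral Real Filter Set

lemma sqrtInvIntegrable (a : ℝ) (ha : 0 < a) :
    IntervalIntegrable (fun x => (Real.sqrt (a^2 - x^2))⁻¹) volume 0 a := by
  have base : IntervalIntegrable (fun x : ℝ => x ^ (-(1/2) : ℝ)) volume (a - 0) (a - a) :=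
    intervalIntegrable_rpow' (by norm_num)
  have refl := base.comp_sub_left a
  simp only [sub_zero, sub_self] at refl
  have cmul := refl.const_mul (Real.sqrt a)⁻¹
  refine IntervalIntegrable.mono_fun' (g := fun x => (Real.sqrt a)⁻¹ * (a - x) ^ (-(1/2) : ℝ)) cmul ?_ ?_
  · have hc : Continuous (fun x : ℝ => Real.sqrt (a^2 - x^2)) :=
      Real.continuous_sqrt.comp (by continuity)
    exact (hc.measurable.inv).aestronglyMeasurable
  · rw [Filter.EventuallyLE, ae_restrict_iff' measurableSet_uIoc]
    refine Filter.Eventually.of_forall (fun x hx => ?_)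
    rw [Set.uIoc_of_le ha.le] at hx
    have hx0 : 0 ≤ x := hx.1.le
    have hxa : x ≤ a := hx.2
    have hax : (0:ℝ) ≤ a - x := by linarith
    have hrw : (a - x) ^ (-(1/2) : ℝ) = (Real.sqrt (a-x))⁻¹ := by
      rw [Real.rpow_neg hax, Real.sqrt_eq_rpow]
    have hnn : (0:ℝ) ≤ (Real.sqrt (a^2 - x^2))⁻¹ := inv_nonneg.2 (Real.sqrt_nonneg _)
    rw [Real.norm_eq_abs, abs_of_nonneg hnn, hrw]
    have key : Real.sqrt a * Real.sqrt (a - x) ≤ Real.sqrt (a^2 - x^2) := by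
      rw [← Real.sqrt_mul ha.le]
      exact Real.sqrt_le_sqrt (by nlinarith)
    rcases eq_or_lt_of_le hxa with rfl | hlt
    · simp
    · have hpos : 0 < Real.sqrt a * Real.sqrt (a - x) :=
        mul_pos (Real.sqrt_pos.2 ha) (Real.sqrt_pos.2 (by linarith))
      calc (Real.sqrt (a^2 - x^2))⁻¹ ≤ (Real.sqrt a * Real.sqrt (a - x))⁻¹ := by
            exact inv_anti₀ hpos key
        _ = (Real.sqrt a)⁻¹ * (Real.sqrt (a-x))⁻¹ := by rw [mul_inv]

lemma sqrtInvIntegral (a : ℝ) (ha : 0 < a) :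
    ∫ x in (0:ℝ)..a, (Real.sqrt (a^2 - x^2))⁻¹ = Real.pi / 2 := by
  have hderiv : ∀ x ∈ Set.Ioo 0 a, HasDerivAt (fun y => Real.arcsin (y / a))
      ((Real.sqrt (a^2 - x^2))⁻¹) x := by
    intro x hx
    have h1 : HasDerivAt (fun y : ℝ => y / a) (1/a) x := by
      simpa using (hasDerivAt_id x).div_const a
    have hne1 : x / a ≠ -1 := by
      have : 0 < x / a := div_pos hx.1 ha
      linarith
    have hne2 : x / a ≠ 1 := by
      have : x / a < 1 := (div_lt_one ha).2 hx.2
      linarith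
    have h2 := (Real.hasDerivAt_arcsin hne1 hne2).comp x h1
    refine h2.congr_deriv ?_
    have hq : (0:ℝ) ≤ 1 - (x/a)^2 := by
      have h3 : 0 < x / a := div_pos hx.1 ha
      have h4 : x / a < 1 := (div_lt_one ha).2 hx.2
      nlinarith
    have hmul : Real.sqrt (1 - (x/a)^2) * a = Real.sqrt (a^2 - x^2) := by
      nth_rewrite 2 [show a = Real.sqrt (a^2) by rw [Real.sqrt_sq ha.le]]
      rw [← Real.sqrt_mul hq]
      congr 1
      field_simp
    rw [← hmul, one_div, mul_inv, one_div]
  have ht0 : Filter.Tendsto (fun y => Real.arcsin (y / a)) (nhdsWithin 0 (Set.Ioi 0))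
      (nhds 0) := by
    have : Continuous (fun y : ℝ => Real.arcsin (y / a)) :=
      Real.continuous_arcsin.comp (continuous_id.div_const a)
    have key := (this.tendsto 0).mono_left (nhdsWithin_le_nhds (s := Set.Ioi 0))
    simpa using key
  have hta : Filter.Tendsto (fun y => Real.arcsin (y / a)) (nhdsWithin a (Set.Iio a))
      (nhds (Real.pi/2)) := by
    have hc : Continuous (fun y : ℝ => Real.arcsin (y / a)) :=
      Real.continuous_arcsin.comp (continuous_id.div_const a)
    have key := (hc.tendsto a).mono_left (nhdsWithin_le_nhds (s := Set.Iio a))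
    simpa [div_self ha.ne', Real.arcsin_one] using key
  have := intervalIntegral.integral_eq_sub_of_hasDerivAt_of_tendsto ha hderiv
    (sqrtInvIntegrable a ha) ht0 hta
  rw [this]; ring


lemma sandwichIntegral (a m M : ℝ) (ha : 0 < a) (hm : 0 < m) (h : ℝ → ℝ)
    (hmeas : AEStronglyMeasurable h (volume.restrict (Set.uIoc 0 a)))
    (hlb : ∀ x ∈ Set.Icc (0:ℝ) a, (Real.sqrt (a^2 - x^2))⁻¹ * (Real.sqrt M)⁻¹ ≤ h x)
    (hub : ∀ x ∈ Set.Icc (0:ℝ) a, h x ≤ (Real.sqrt (a^2 - x^2))⁻¹ * (Real.sqrt m)⁻¹) :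
    Real.pi/2 * (Real.sqrt M)⁻¹ ≤ (∫ x in (0:ℝ)..a, h x) ∧
    (∫ x in (0:ℝ)..a, h x) ≤ Real.pi/2 * (Real.sqrt m)⁻¹ := by
  have gInt := sqrtInvIntegrable a ha
  have intLow : IntervalIntegrable (fun x => (Real.sqrt (a^2 - x^2))⁻¹ * (Real.sqrt M)⁻¹)
      volume 0 a := gInt.mul_const _
  have intHigh : IntervalIntegrable (fun x => (Real.sqrt (a^2 - x^2))⁻¹ * (Real.sqrt m)⁻¹)
      volume 0 a := gInt.mul_const _
  have hmid : IntervalIntegrable h volume 0 a := by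
    refine intHigh.mono_fun' hmeas ?_
    rw [Filter.EventuallyLE, ae_restrict_iff' measurableSet_uIoc]
    refine Filter.Eventually.of_forall (fun x hx => ?_)
    rw [Set.uIoc_of_le ha.le] at hx
    have hx' : x ∈ Set.Icc (0:ℝ) a := ⟨hx.1.le, hx.2⟩
    have h0 : 0 ≤ h x := le_trans (by positivity) (hlb x hx')
    rw [Real.norm_eq_abs, abs_of_nonneg h0]
    exact hub x hx'
  constructor
  · have := intervalIntegral.integral_mono_on ha.le intLow hmid hlb
    rwa [intervalIntegral.integral_mul_const, sqrtInvIntegral a ha] at this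
  · have := intervalIntegral.integral_mono_on ha.le hmid intHigh hub
    rwa [intervalIntegral.integral_mul_const, sqrtInvIntegral a ha] at this

lemma tendstoBound {α : Type*} {F : Filter α} (β V₀ : ℝ) (hβ : 0 < β) (hV0 : 0 < V₀)
    (hc : 4*β*V₀^2 < 1) (u v : α → ℝ) (hu : Filter.Tendsto u F (nhds 0))
    (hv : Filter.Tendsto v F (nhds 0)) :
    Filter.Tendsto
      (fun t => Real.sqrt 2 * Real.pi *
        (Real.sqrt (1/2 - 2*β*V₀^2/((1-(u t)^2)*(1-(v t)^2))))⁻¹) F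
      (nhds (2*Real.pi/Real.sqrt (1 - 4*β*V₀^2))) := by
  have h1 : Filter.Tendsto (fun t => (1-(u t)^2)*(1-(v t)^2)) F (nhds 1) := by
    have := (tendsto_const_nhds (x := (1:ℝ)).sub (hu.pow 2)).mul
      (tendsto_const_nhds (x := (1:ℝ)).sub (hv.pow 2))
    norm_num at this
    exact this
  have h2 : Filter.Tendsto (fun t => 1/2 - 2*β*V₀^2/((1-(u t)^2)*(1-(v t)^2))) F
      (nhds (1/2 - 2*β*V₀^2)) := by
    have := tendsto_const_nhds (x := (1/2:ℝ)).sub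
      ((tendsto_const_nhds (x := 2*β*V₀^2)).div h1 one_ne_zero)
    simpa using this
  have hkpos : 0 < 1/2 - 2*β*V₀^2 := by nlinarith
  have h3 := (Real.continuous_sqrt.tendsto _).comp h2
  have h4 := h3.inv₀ (ne_of_gt (Real.sqrt_pos.2 hkpos))
  have h5 := h4.const_mul (Real.sqrt 2 * Real.pi)
  have hval : Real.sqrt 2 * Real.pi * (Real.sqrt (1/2 - 2*β*V₀^2))⁻¹
      = 2*Real.pi/Real.sqrt (1 - 4*β*V₀^2) := by
    have hd : 0 < 1 - 4*β*V₀^2 := by linarith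
    have heq : (1:ℝ)/2 - 2*β*V₀^2 = (1 - 4*β*V₀^2)/2 := by ring
    have hsd : 0 < Real.sqrt (1 - 4*β*V₀^2) := Real.sqrt_pos.2 hd
    have hsd2 : 0 < Real.sqrt ((1 - 4*β*V₀^2)/2) := Real.sqrt_pos.2 (by linarith)
    have key : Real.sqrt ((1 - 4*β*V₀^2)/2) * Real.sqrt 2 = Real.sqrt (1 - 4*β*V₀^2) := by
      rw [← Real.sqrt_mul (by linarith)]
      norm_num
    rw [heq]
    rw [eq_div_iff hsd.ne', ← key]
    have h22 : Real.sqrt 2 * Real.sqrt 2 = 2 := Real.mul_self_sqrt (by norm_num)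
    field_simp
    nlinarith [hsd2, h22, Real.pi_pos]
  exact hval ▸ h5

theorem combDrive_period_limit_zero (β V₀ : ℝ) (hβ : 0 < β) (hV0 : 0 < V₀)
    (hV1 : V₀ < 1 / (2 * Real.sqrt β))
    (xstar : ℝ) (hxstar : xstar = Real.sqrt (1 - 2 * Real.sqrt β * V₀))
    (E : ℝ → ℝ)
    (hE : ∀ x, E x = x ^ 2 / 2 - 2 * β * V₀ ^ 2 / (1 - x ^ 2) + 2 * β * V₀ ^ 2)
    (hstar : ℝ) (hhstar : hstar = E xstar)
    (xp : ℝ → ℝ)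
    (hxp : ∀ ℏ ∈ Set.Ioo (0 : ℝ) hstar, xp ℏ ∈ Set.Ioo 0 xstar ∧ E (xp ℏ) = ℏ)
    (T : ℝ → ℝ)
    (hT : ∀ ℏ ∈ Set.Ioo (0 : ℝ) hstar,
      T ℏ = 2 * Real.sqrt 2 * ∫ x in (0 : ℝ)..(xp ℏ), (Real.sqrt (ℏ - E x))⁻¹) :
    Filter.Tendsto T (nhdsWithin 0 (Set.Ioo 0 hstar))
      (nhds (2 * Real.pi / Real.sqrt (1 - 4 * β * V₀ ^ 2))) := by
  set s := Real.sqrt β with hs_def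
  have hs : 0 < s := Real.sqrt_pos.2 hβ
  have hs2 : s^2 = β := Real.sq_sqrt hβ.le
  have h2sV : 2*s*V₀ < 1 := by
    have := (lt_div_iff₀ (by positivity : (0:ℝ) < 2*s)).1 hV1
    linarith
  have h2sVpos : 0 < 2*s*V₀ := by positivity
  have hc : 4*β*V₀^2 < 1 := by nlinarith
  have hkpos : 0 < 2*β*V₀^2 := by positivity
  have hx2 : xstar^2 = 1 - 2*s*V₀ := by
    rw [hxstar]; exact Real.sq_sqrt (by linarith)
  have hxpos : 0 < xstar := by
    rw [hxstar]; exact Real.sqrt_pos.2 (by linarith)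
  have hxlt1 : xstar < 1 := by nlinarith
  have Ediff : ∀ u v : ℝ, u^2 ≠ 1 → v^2 ≠ 1 →
      E u - E v = (u^2 - v^2) * (1/2 - 2*β*V₀^2/((1-u^2)*(1-v^2))) := by
    intro u v hu hv
    have h1 : 1 - u^2 ≠ 0 := fun h => hu (by linarith)
    have h2 : 1 - v^2 ≠ 0 := fun h => hv (by linarith)
    rw [hE, hE]
    field_simp
    ring
  have Gpos : ∀ u v : ℝ, 0 ≤ u → u < xstar → 0 ≤ v → v < xstar →
      0 < 1/2 - 2*β*V₀^2/((1-u^2)*(1-v^2)) := by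
    intro u v hu0 hu1 hv0 hv1
    have hu2 : u^2 < xstar^2 := by nlinarith
    have hv2 : v^2 < xstar^2 := by nlinarith
    have hA : 2*s*V₀ < 1 - u^2 := by nlinarith
    have hB : 2*s*V₀ < 1 - v^2 := by nlinarith
    have hP : 4*β*V₀^2 < (1-u^2)*(1-v^2) := by nlinarith
    have hPpos : 0 < (1-u^2)*(1-v^2) := by nlinarith
    rw [sub_pos, div_lt_iff₀ hPpos]
    linarith
  have hE0 : E 0 = 0 := by rw [hE]; norm_num
  have hEmeas : Measurable E := by
    have hfun : E = fun x => x ^ 2 / 2 - 2 * β * V₀ ^ 2 / (1 - x ^ 2) + 2 * β * V₀ ^ 2 :=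
      funext hE
    rw [hfun]
    exact (((measurable_id.pow_const 2).div_const 2).sub
      (measurable_const.div (measurable_const.sub (measurable_id.pow_const 2)))).add
      measurable_const
  -- xp tends to 0
  have hxp0 : Filter.Tendsto xp (nhdsWithin 0 (Set.Ioo 0 hstar)) (nhds 0) := by
    rw [Metric.tendsto_nhds]
    intro ε hε
    rcases le_or_gt xstar ε with hcase | hcase
    · filter_upwards [self_mem_nhdsWithin] with ℏ hℏ
      obtain ⟨⟨h1, h2⟩, _⟩ := hxp ℏ hℏ
      rw [Real.dist_eq, sub_zero, abs_of_pos h1]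
      linarith
    · have hε1 : ε < 1 := lt_trans hcase hxlt1
      have hεx2 : ε^2 ≠ 1 := ne_of_lt (by nlinarith)
      have hEε : 0 < E ε := by
        have hd := Ediff ε 0 hεx2 (by norm_num)
        rw [hE0, sub_zero] at hd
        rw [hd]
        have hG := Gpos ε 0 hε.le hcase le_rfl hxpos
        have hε2 : 0 < ε^2 := by positivity
        norm_num at hG ⊢
        nlinarith
      filter_upwards [mem_nhdsWithin_of_mem_nhds (Iio_mem_nhds hEε),
        self_mem_nhdsWithin] with ℏ hlt hmem
      obtain ⟨⟨h1, h2⟩, hEq⟩ := hxp ℏ hmem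
      rw [Real.dist_eq, sub_zero, abs_of_pos h1]
      by_contra hge
      push_neg at hge
      have hxe2 : (xp ℏ)^2 ≠ 1 := ne_of_lt (by nlinarith)
      have hd := Ediff (xp ℏ) ε hxe2 hεx2
      have hGp := Gpos (xp ℏ) ε h1.le h2 hε.le hcase
      have hnn : 0 ≤ E (xp ℏ) - E ε := by
        rw [hd]
        have : 0 ≤ (xp ℏ)^2 - ε^2 := by nlinarith
        positivity
      rw [hEq] at hnn
      simp only [Set.mem_Iio] at hlt
      linarith
  -- the sandwich bounds, eventually
  have hBounds : ∀ᶠ ℏ in nhdsWithin 0 (Set.Ioo 0 hstar),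
      Real.sqrt 2 * Real.pi *
        (Real.sqrt (1/2 - 2*β*V₀^2/((1-(xp ℏ)^2)*(1-(0:ℝ)^2))))⁻¹ ≤ T ℏ ∧
      T ℏ ≤ Real.sqrt 2 * Real.pi *
        (Real.sqrt (1/2 - 2*β*V₀^2/((1-(xp ℏ)^2)*(1-(xp ℏ)^2))))⁻¹ := by
    filter_upwards [self_mem_nhdsWithin] with ℏ hℏ
    obtain ⟨⟨ha0, ha1⟩, hEq⟩ := hxp ℏ hℏ
    set a := xp ℏ with ha_def
    set M := 1/2 - 2*β*V₀^2/((1-a^2)*(1-(0:ℝ)^2)) with hM_def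
    set m := 1/2 - 2*β*V₀^2/((1-a^2)*(1-a^2)) with hm_def
    have hmpos : 0 < m := by
      have := Gpos a a ha0.le ha1 ha0.le ha1; rwa [hm_def]
    have hMpos : 0 < M := by
      have := Gpos a 0 ha0.le ha1 le_rfl hxpos; rwa [hM_def]
    have ha_lt1 : a < 1 := lt_trans ha1 hxlt1
    have h1a2 : 0 < 1 - a^2 := by nlinarith
    -- pointwise facts on Icc 0 a
    have hpoint : ∀ x ∈ Set.Icc (0:ℝ) a,
        (Real.sqrt (a^2 - x^2))⁻¹ * (Real.sqrt M)⁻¹ ≤ (Real.sqrt (ℏ - E x))⁻¹ ∧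
        (Real.sqrt (ℏ - E x))⁻¹ ≤ (Real.sqrt (a^2 - x^2))⁻¹ * (Real.sqrt m)⁻¹ := by
      intro x hx
      obtain ⟨hx0, hxa⟩ := hx
      have hx_lt : x < xstar := lt_of_le_of_lt hxa ha1
      have hx1 : x < 1 := lt_trans hx_lt hxlt1
      have h1x2 : 0 < 1 - x^2 := by nlinarith
      have hxne : x^2 ≠ 1 := ne_of_lt (by nlinarith)
      have hane : a^2 ≠ 1 := ne_of_lt (by nlinarith)
      set G := 1/2 - 2*β*V₀^2/((1-a^2)*(1-x^2)) with hG_def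
      have hGpos : 0 < G := by
        have := Gpos a x ha0.le ha1 hx0 hx_lt; rwa [hG_def]
      have hfact : ℏ - E x = (a^2 - x^2) * G := by
        rw [← hEq]
        exact Ediff a x hane hxne
      have hax2 : 0 ≤ a^2 - x^2 := by nlinarith
      have hsplit : (Real.sqrt (ℏ - E x))⁻¹
          = (Real.sqrt (a^2 - x^2))⁻¹ * (Real.sqrt G)⁻¹ := by
        rw [hfact, Real.sqrt_mul hax2, mul_inv]
      -- m ≤ G ≤ M
      have hGle : G ≤ M := by
        rw [hG_def, hM_def]
        have hb : 0 < (1-a^2)*(1-x^2) := by positivity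
        have hbc : (1-a^2)*(1-x^2) ≤ (1-a^2)*(1-(0:ℝ)^2) := by nlinarith
        have := div_le_div_of_nonneg_left hkpos.le hb hbc
        linarith
      have hGge : m ≤ G := by
        rw [hG_def, hm_def]
        have hb : 0 < (1-a^2)*(1-a^2) := by positivity
        have hbc : (1-a^2)*(1-a^2) ≤ (1-a^2)*(1-x^2) := by nlinarith
        have := div_le_div_of_nonneg_left hkpos.le hb hbc
        linarith
      have hsG : 0 < Real.sqrt G := Real.sqrt_pos.2 hGpos
      have hsm : 0 < Real.sqrt m := Real.sqrt_pos.2 hmpos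
      have hnn : (0:ℝ) ≤ (Real.sqrt (a^2 - x^2))⁻¹ := by positivity
      constructor
      · rw [hsplit]
        refine mul_le_mul_of_nonneg_left ?_ hnn
        exact inv_anti₀ hsG (Real.sqrt_le_sqrt hGle)
      · rw [hsplit]
        refine mul_le_mul_of_nonneg_left ?_ hnn
        exact inv_anti₀ hsm (Real.sqrt_le_sqrt hGge)
    have hmeas : AEStronglyMeasurable (fun x => (Real.sqrt (ℏ - E x))⁻¹)
        (volume.restrict (Set.uIoc 0 a)) :=
      ((Real.continuous_sqrt.measurable.comp (measurable_const.sub hEmeas)).inv).aestronglyMeasurable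
    have key := sandwichIntegral a m M ha0 hmpos (fun x => (Real.sqrt (ℏ - E x))⁻¹)
      hmeas (fun x hx => (hpoint x hx).1) (fun x hx => (hpoint x hx).2)
    obtain ⟨klow, khigh⟩ := key
    have hTval := hT ℏ hℏ
    have hs2nn : (0:ℝ) ≤ 2 * Real.sqrt 2 := by positivity
    constructor
    · have := mul_le_mul_of_nonneg_left klow hs2nn
      have heq : 2 * Real.sqrt 2 * (Real.pi/2 * (Real.sqrt M)⁻¹)
          = Real.sqrt 2 * Real.pi * (Real.sqrt M)⁻¹ := by ring
      rw [hTval]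
      linarith [heq ▸ this]
    · have := mul_le_mul_of_nonneg_left khigh hs2nn
      have heq : 2 * Real.sqrt 2 * (Real.pi/2 * (Real.sqrt m)⁻¹)
          = Real.sqrt 2 * Real.pi * (Real.sqrt m)⁻¹ := by ring
      rw [hTval]
      linarith [heq ▸ this]
  have hLo := tendstoBound (F := nhdsWithin 0 (Set.Ioo 0 hstar)) β V₀ hβ hV0 hc
    xp (fun _ => 0) hxp0 tendsto_const_nhds
  have hHi := tendstoBound (F := nhdsWithin 0 (Set.Ioo 0 hstar)) β V₀ hβ hV0 hc
    xp xp hxp0 hxp0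
  exact tendsto_of_tendsto_of_tendsto_of_le_of_le' hLo hHi
    (hBounds.mono fun ℏ h => h.1) (hBounds.mono fun ℏ h => h.2)
end

section
/- Let β > 0 and 0 < V₀ < 1/(2√β), and let T(ℏ) be the period function of the autonomous comb-drive equation. Then T(ℏ) tends to +∞ as ℏ tends to ℏ* from the left (limit along (0, ℏ*)). -/
open Real Filter MeasureTheory intervalIntegral Set

lemma comb_aux1 (s a u up : ℝ) (hs : 0 < s) (ha : a = 1 - 2*s) (hu : 0 ≤ u)
    (huup : u ≤ up) (hupa : up ≤ a) :
    s*(a-up)*(up-u) ≤ (a-u)^2/(2*(1-u)) - (a-up)^2/(2*(1-up)) := by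
  have h1u : 0 < 1 - u := by nlinarith
  have h1up : 0 < 1 - up := by nlinarith
  rw [div_sub_div _ _ (by positivity) (by positivity), le_div_iff₀ (by positivity)]
  nlinarith [mul_nonneg (mul_nonneg (sub_nonneg.2 huup) (sub_nonneg.2 huup)) h1up.le,
    mul_nonneg (mul_nonneg (mul_nonneg (mul_nonneg (sub_nonneg.2 huup) hs.le) (sub_nonneg.2 hupa)) hu) h1up.le,
    mul_nonneg (mul_nonneg (sub_nonneg.2 huup) (sub_nonneg.2 hupa)) (sub_nonneg.2 (by linarith : a - up ≤ 1 - up)),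
    mul_nonneg (mul_nonneg (mul_nonneg (sub_nonneg.2 huup) (sub_nonneg.2 hupa)) h1up.le) (by linarith : (0:ℝ) ≤ 1 - 2*s)]


set_option maxHeartbeats 1000000 in
lemma comb_key (s xstar hstar : ℝ) (E : ℝ → ℝ) (ℏ p : ℝ)
    (hs0 : 0 < s) (hs1 : 2*s < 1) (hx2 : xstar^2 = 1-2*s) (hx0 : 0 < xstar) (hx1 : xstar < 1)
    (hid : ∀ x : ℝ, x^2 < 1 → hstar - E x = (xstar^2-x^2)^2/(2*(1-x^2)))
    (hEm : Measurable E)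
    (hℏ1 : ℏ < hstar) (hp0 : 0 < p) (hpx : p < xstar) (hEp : E p = ℏ) :
    2*Real.sqrt 2*Real.sqrt s*(Real.log xstar - Real.log (Real.sqrt (2*(hstar-ℏ))/xstar))
      ≤ 2*Real.sqrt 2*∫ x in (0:ℝ)..p, (Real.sqrt (ℏ - E x))⁻¹ := by
  have hp1 : p < 1 := hpx.trans hx1
  have hΔ : hstar - ℏ = (xstar^2 - p^2)^2 / (2*(1-p^2)) := by
    rw [← hEp]; exact hid p (by nlinarith)
  have hap : 0 < xstar^2 - p^2 := by nlinarith
  set c : ℝ := s * (xstar^2 - p^2) * p with hc_def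
  have hc : 0 < c := by positivity
  -- lower bound:  c (p - x) ≤ ℏ - E x  on [0,p]
  have hlow : ∀ x ∈ Set.Icc (0:ℝ) p, c * (p - x) ≤ ℏ - E x := by
    intro x hx
    have hx0' : 0 ≤ x := hx.1
    have hxp' : x ≤ p := hx.2
    have hx1' : x^2 < 1 := by nlinarith
    have heq : ℏ - E x = (xstar^2 - x^2)^2/(2*(1-x^2)) - (xstar^2 - p^2)^2/(2*(1-p^2)) := by
      have h1 := hid x hx1'
      linarith
    rw [heq]
    have haux := comb_aux1 s (xstar^2) (x^2) (p^2) hs0 (by linarith) (by positivity)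
      (by nlinarith) (by nlinarith)
    have h2 : c * (p - x) ≤ s * (xstar^2 - p^2) * (p^2 - x^2) := by
      rw [hc_def]
      nlinarith [mul_nonneg (mul_nonneg (mul_nonneg hs0.le hap.le) (sub_nonneg.2 hxp')) hx0']
    linarith
  -- upper bound : ℏ - E x ≤ (xstar - x)^2 / s  on [0, p]
  have hup : ∀ x ∈ Set.Icc (0:ℝ) p, ℏ - E x ≤ (xstar - x)^2 / s := by
    intro x hx
    have hx0' : 0 ≤ x := hx.1
    have hxp' : x ≤ p := hx.2
    have hx1' : x^2 < 1 := by nlinarith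
    have h1 := hid x hx1'
    have h2 : hstar - E x ≤ (xstar - x)^2 / s := by
      rw [h1, div_le_div_iff₀ (by nlinarith) hs0]
      have hbr : s*(xstar+x)^2 ≤ 2*(1-x^2) := by
        nlinarith [mul_nonneg (mul_nonneg hs0.le (by linarith : (0:ℝ) ≤ 1+x)) (by linarith : (0:ℝ) ≤ 1-x),
          mul_nonneg (by linarith : (0:ℝ) ≤ 1+x) (by linarith : (0:ℝ) ≤ xstar - x),
          mul_nonneg (by linarith : (0:ℝ) ≤ 1+x) (sq_nonneg (1-xstar)),
          mul_nonneg (mul_nonneg hs0.le (by linarith : (0:ℝ) ≤ 1-xstar)) (by linarith : (0:ℝ) ≤ 1+2*x+xstar)]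
      nlinarith [mul_le_mul_of_nonneg_left hbr (sq_nonneg (xstar - x))]
    linarith
  set f : ℝ → ℝ := fun x => (Real.sqrt (ℏ - E x))⁻¹ with hf_def
  have hf_meas : Measurable f :=
    (Real.continuous_sqrt.measurable.comp (measurable_const.sub hEm)).inv
  have hf_nonneg : ∀ x, 0 ≤ f x := fun x => by
    rw [hf_def]; positivity
  -- dominating function
  have hh_int : IntervalIntegrable (fun x => (Real.sqrt c)⁻¹ * (p - x) ^ (-(1/2) : ℝ))
      volume 0 p := by
    have h1 : IntervalIntegrable (fun x : ℝ => x ^ (-(1/2):ℝ)) volume 0 p :=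
      intervalIntegrable_rpow' (by norm_num)
    have h2 := (h1.comp_sub_left p).symm
    have h3 := h2.const_mul (Real.sqrt c)⁻¹
    simpa using h3
  have hf_int : IntervalIntegrable f volume 0 p := by
    apply hh_int.mono_fun hf_meas.aestronglyMeasurable.restrict
    rw [Set.uIoc_of_le hp0.le]
    filter_upwards [ae_restrict_mem measurableSet_Ioc] with x hx
    have hxIcc : x ∈ Set.Icc (0:ℝ) p := ⟨hx.1.le, hx.2⟩
    have hpx0 : (0:ℝ) ≤ p - x := by linarith [hx.2]
    have hval : (Real.sqrt c)⁻¹ * (p - x) ^ (-(1/2) : ℝ) = (Real.sqrt (c*(p-x)))⁻¹ := by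
      rw [Real.rpow_neg hpx0, Real.sqrt_mul hc.le, ← Real.sqrt_eq_rpow, mul_inv]
    have hfle : f x ≤ (Real.sqrt (c*(p-x)))⁻¹ := by
      rcases eq_or_lt_of_le hx.2 with heq | hlt
      · rw [hf_def]
        simp only [heq, hEp, sub_self, Real.sqrt_zero, inv_zero]
        positivity
      · have hcp : 0 < c * (p - x) := by
          have : 0 < p - x := by linarith
          positivity
        have := Real.sqrt_le_sqrt (hlow x hxIcc)
        exact inv_anti₀ (Real.sqrt_pos.2 hcp) this
    rw [Real.norm_eq_abs, Real.norm_eq_abs, abs_of_nonneg (hf_nonneg x), abs_of_nonneg]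
    · rw [hval]; exact hfle
    · positivity
  -- comparison function  g x = √s / (xstar - x)
  have hg_cont : ContinuousOn (fun x : ℝ => Real.sqrt s * (xstar - x)⁻¹)
      (Set.uIcc (0:ℝ) p) := by
    apply ContinuousOn.mul continuousOn_const
    apply ContinuousOn.inv₀ (continuous_const.sub continuous_id).continuousOn
    intro x hx
    rw [Set.uIcc_of_le hp0.le] at hx
    show xstar - x ≠ 0
    have := hx.2
    intro h0
    nlinarith
  have hg_int : IntervalIntegrable (fun x : ℝ => Real.sqrt s * (xstar - x)⁻¹) volume 0 p :=
    hg_cont.intervalIntegrable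
  have hmono : (∫ x in (0:ℝ)..p, Real.sqrt s * (xstar - x)⁻¹) ≤ ∫ x in (0:ℝ)..p, f x := by
    apply intervalIntegral.integral_mono_ae_restrict hp0.le hg_int hf_int
    have hae : ∀ᵐ (x : ℝ), x ≠ p := by
      have hset : {x : ℝ | ¬ x ≠ p} = {p} := by ext y; simp
      rw [ae_iff, hset]
      exact measure_singleton p
    filter_upwards [ae_restrict_mem measurableSet_Icc, ae_restrict_of_ae hae] with x hx hxne
    have hxlt : x < p := lt_of_le_of_ne hx.2 hxne
    have hpos : 0 < ℏ - E x :=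
      lt_of_lt_of_le (mul_pos hc (by linarith : (0:ℝ) < p - x)) (hlow x hx)
    have hsqrtpos : 0 < Real.sqrt (ℏ - E x) := Real.sqrt_pos.2 hpos
    have hxx : 0 ≤ xstar - x := by nlinarith [hx.2]
    have hle2 : Real.sqrt (ℏ - E x) ≤ (xstar - x)/Real.sqrt s := by
      have h2 : Real.sqrt ((xstar - x)^2 / s) = (xstar - x)/Real.sqrt s := by
        rw [Real.sqrt_div (sq_nonneg _), Real.sqrt_sq hxx]
      calc Real.sqrt (ℏ - E x) ≤ Real.sqrt ((xstar - x)^2/s) := Real.sqrt_le_sqrt (hup x hx)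
        _ = _ := h2
    have h3 := inv_anti₀ hsqrtpos hle2
    rw [inv_div] at h3
    calc Real.sqrt s * (xstar - x)⁻¹ = Real.sqrt s / (xstar - x) := by
          rw [div_eq_mul_inv]
      _ ≤ f x := h3
  -- value of the comparison integral
  have hgval : (∫ x in (0:ℝ)..p, Real.sqrt s * (xstar - x)⁻¹)
      = Real.sqrt s * (Real.log xstar - Real.log (xstar - p)) := by
    rw [intervalIntegral.integral_const_mul]
    have h1 : (∫ x in (0:ℝ)..p, (xstar - x)⁻¹) = ∫ x in (xstar - p)..(xstar - 0), x⁻¹ :=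
      intervalIntegral.integral_comp_sub_left (fun u => u⁻¹) xstar
    have h0mem : (0:ℝ) ∉ Set.uIcc (xstar - p) xstar := by
      rw [Set.uIcc_of_le (by linarith)]
      intro hmem
      have := hmem.1
      nlinarith
    rw [h1, sub_zero, integral_inv h0mem,
      Real.log_div (ne_of_gt hx0) (by intro h0; nlinarith : xstar - p ≠ 0)]
  -- assemble
  have hxpm : xstar - p ≤ Real.sqrt (2*(hstar - ℏ)) / xstar := by
    have e1 : 2*(hstar - ℏ) = (xstar^2-p^2)^2/(1-p^2) := by
      have h1p : (1:ℝ) - p^2 ≠ 0 := by nlinarith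
      rw [hΔ]; field_simp
    have h1 : (xstar*(xstar - p))^2 ≤ 2*(hstar - ℏ) := by
      rw [e1, le_div_iff₀ (by nlinarith)]
      nlinarith [sq_nonneg (xstar - p), sq_nonneg (xstar + p), sq_nonneg p,
        mul_pos hp0 (sub_pos.2 hpx)]
    have h2 : xstar*(xstar - p) ≤ Real.sqrt (2*(hstar-ℏ)) :=
      Real.le_sqrt_of_sq_le h1
    rw [le_div_iff₀ hx0]
    nlinarith
  have hlogle : Real.log (xstar - p) ≤ Real.log (Real.sqrt (2*(hstar-ℏ))/xstar) :=
    Real.log_le_log (by nlinarith) hxpm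
  have s1 : 2*Real.sqrt 2*Real.sqrt s*(Real.log xstar - Real.log (Real.sqrt (2*(hstar-ℏ))/xstar))
      ≤ 2*Real.sqrt 2*(Real.sqrt s*(Real.log xstar - Real.log (xstar - p))) := by
    have h22 : (0:ℝ) ≤ 2*Real.sqrt 2*Real.sqrt s := by positivity
    nlinarith [mul_le_mul_of_nonneg_left hlogle h22]
  have s3 : 2*Real.sqrt 2*(∫ x in (0:ℝ)..p, Real.sqrt s * (xstar - x)⁻¹)
      ≤ 2*Real.sqrt 2*(∫ x in (0:ℝ)..p, f x) :=
    mul_le_mul_of_nonneg_left hmono (by positivity)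
  calc 2*Real.sqrt 2*Real.sqrt s*(Real.log xstar - Real.log (Real.sqrt (2*(hstar-ℏ))/xstar))
      ≤ 2*Real.sqrt 2*(Real.sqrt s*(Real.log xstar - Real.log (xstar - p))) := s1
    _ = 2*Real.sqrt 2*(∫ x in (0:ℝ)..p, Real.sqrt s * (xstar - x)⁻¹) := by rw [hgval]
    _ ≤ 2*Real.sqrt 2*(∫ x in (0:ℝ)..p, f x) := s3
    _ = 2*Real.sqrt 2*∫ x in (0:ℝ)..p, (Real.sqrt (ℏ - E x))⁻¹ := by rw [hf_def]

theorem combDrive_period_limit_hstar (β V₀ : ℝ) (hβ : 0 < β) (hV0 : 0 < V₀)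
    (hV1 : V₀ < 1 / (2 * Real.sqrt β))
    (xstar : ℝ) (hxstar : xstar = Real.sqrt (1 - 2 * Real.sqrt β * V₀))
    (E : ℝ → ℝ)
    (hE : ∀ x, E x = x ^ 2 / 2 - 2 * β * V₀ ^ 2 / (1 - x ^ 2) + 2 * β * V₀ ^ 2)
    (hstar : ℝ) (hhstar : hstar = E xstar)
    (xp : ℝ → ℝ)
    (hxp : ∀ ℏ ∈ Set.Ioo (0 : ℝ) hstar, xp ℏ ∈ Set.Ioo 0 xstar ∧ E (xp ℏ) = ℏ)
    (T : ℝ → ℝ)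
    (hT : ∀ ℏ ∈ Set.Ioo (0 : ℝ) hstar,
      T ℏ = 2 * Real.sqrt 2 * ∫ x in (0 : ℝ)..(xp ℏ), (Real.sqrt (ℏ - E x))⁻¹) :
    Filter.Tendsto T (nhdsWithin hstar (Set.Ioo 0 hstar)) Filter.atTop := by
  have hsb : 0 < Real.sqrt β := Real.sqrt_pos.2 hβ
  set s : ℝ := Real.sqrt β * V₀ with hs_def
  have hs0 : 0 < s := by positivity
  have hs1 : 2 * s < 1 := by
    have h := (lt_div_iff₀ (by positivity : (0:ℝ) < 2*Real.sqrt β)).1 hV1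
    nlinarith
  have hx2 : xstar ^ 2 = 1 - 2 * s := by
    rw [hxstar, show 1 - 2 * Real.sqrt β * V₀ = 1 - 2*s by ring]
    exact Real.sq_sqrt (by linarith)
  have hx0 : 0 < xstar := by
    rw [hxstar]; exact Real.sqrt_pos.2 (by nlinarith)
  have hx1 : xstar < 1 := by nlinarith
  have hsq : β * V₀ ^ 2 = s ^ 2 := by
    rw [hs_def, mul_pow, Real.sq_sqrt hβ.le]
  -- explicit value of hstar
  have hsv : hstar = (1 - 2*s)^2 / 2 := by
    rw [hhstar, hE, hx2]
    have h2s : (1:ℝ) - (1 - 2*s) ≠ 0 := by intro h; nlinarith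
    field_simp [h2s]
    nlinarith [hsq]
  -- hstar identity
  have hid : ∀ x : ℝ, x ^ 2 < 1 → hstar - E x = (xstar^2 - x^2)^2 / (2*(1 - x^2)) := by
    intro x hx
    have hne : (1:ℝ) - x^2 ≠ 0 := by intro h; nlinarith
    rw [hE, hsv, hx2]
    have h2 : 2 * β * V₀ ^ 2 = 2 * s^2 := by rw [mul_assoc, hsq]
    rw [h2]
    field_simp
    ring
  have hstar_pos : 0 < hstar := by rw [hsv]; nlinarith
  
  have hEmeas : Measurable E := by
    have hEeq : E = fun x => x ^ 2 / 2 - 2 * β * V₀ ^ 2 / (1 - x ^ 2) + 2 * β * V₀ ^ 2 :=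
      funext hE
    rw [hEeq]
    exact (((measurable_id.pow_const 2).div_const 2).sub
      (measurable_const.div (measurable_const.sub (measurable_id.pow_const 2)))).add
      measurable_const
  set M : ℝ → ℝ := fun ℏ =>
      2*Real.sqrt 2*Real.sqrt s *
        (Real.log xstar - Real.log (Real.sqrt (2*(hstar - ℏ)) / xstar)) with hM_def
  have key : ∀ ℏ ∈ Set.Ioo (0:ℝ) hstar, M ℏ ≤ T ℏ := by
    intro ℏ hℏ
    obtain ⟨hp, hEp⟩ := hxp ℏ hℏ
    rw [hT ℏ hℏ]
    exact comb_key s xstar hstar E ℏ (xp ℏ) hs0 hs1 hx2 hx0 hx1 hid hEmeas hℏ.2 hp.1 hp.2 hEp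
  -- limit of the minorant
  have hg0 : Filter.Tendsto (fun ℏ => Real.sqrt (2*(hstar - ℏ)) / xstar)
      (nhdsWithin hstar (Set.Ioo 0 hstar)) (nhdsWithin 0 (Set.Ioi 0)) := by
    rw [tendsto_nhdsWithin_iff]
    constructor
    · have hcont : Continuous (fun ℏ : ℝ => Real.sqrt (2*(hstar - ℏ)) / xstar) :=
        (Real.continuous_sqrt.comp (continuous_const.mul (continuous_const.sub continuous_id))).div_const
          xstar
      have h0 := hcont.tendsto hstar
      have : Real.sqrt (2*(hstar - hstar)) / xstar = 0 := by simp
      rw [this] at h0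
      exact h0.mono_left nhdsWithin_le_nhds
    · filter_upwards [self_mem_nhdsWithin] with ℏ hℏ
      have h1 : 0 < hstar - ℏ := by linarith [hℏ.2]
      exact div_pos (Real.sqrt_pos.2 (by linarith)) hx0
  have hlog := Real.tendsto_log_nhdsGT_zero.comp hg0
  have h2 := Filter.tendsto_neg_atBot_atTop.comp hlog
  have h3 := Filter.tendsto_atTop_add_const_left _ (Real.log xstar) h2
  have h4 : Filter.Tendsto
      (fun ℏ => Real.log xstar - Real.log (Real.sqrt (2*(hstar - ℏ)) / xstar))
      (nhdsWithin hstar (Set.Ioo 0 hstar)) Filter.atTop := by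
    have : (fun ℏ => Real.log xstar - Real.log (Real.sqrt (2*(hstar - ℏ)) / xstar))
        = fun ℏ => Real.log xstar +
            (Neg.neg ∘ (Real.log ∘ fun ℏ => Real.sqrt (2*(hstar - ℏ)) / xstar)) ℏ := by
      funext y; simp [sub_eq_add_neg, Function.comp]
    rw [this]
    exact h3
  have hM_tendsto : Filter.Tendsto M (nhdsWithin hstar (Set.Ioo 0 hstar)) Filter.atTop := by
    rw [hM_def]
    exact h4.const_mul_atTop (by positivity : (0:ℝ) < 2*Real.sqrt 2*Real.sqrt s)
  exact Filter.tendsto_atTop_mono'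
    _ (Filter.eventually_of_mem self_mem_nhdsWithin (fun ℏ hℏ => key ℏ hℏ)) hM_tendsto
end

section
/- Let β > 0 and 0 < V₀ < 1/(2√β), and let T(ℏ) be the period function of the autonomous comb-drive equation. Then T is strictly monotonically increasing on the interval (0, ℏ*): for all ℏ₁, ℏ₂ with 0 < ℏ₁ < ℏ₂ < ℏ*, T(ℏ₁) < T(ℏ₂). -/
open Set MeasureTheory

lemma cd_hasDerivAt_E (k x : ℝ) (hx : 1 - x^2 ≠ 0) :
    HasDerivAt (fun y => y^2/2 - k/(1-y^2) + k) (x - 2*k*x/(1-x^2)^2) x := by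
  have h2 : HasDerivAt (fun y : ℝ => 1 - y^2) (0 - 2*x^1) x :=
    (hasDerivAt_const x 1).sub (hasDerivAt_pow 2 x)
  have h3 : HasDerivAt (fun y : ℝ => k/(1-y^2))
      ((0*(1-x^2) - k*(0 - 2*x^1))/(1-x^2)^2) x :=
    (hasDerivAt_const x k).div h2 hx
  have h1 : HasDerivAt (fun y : ℝ => y^2/2) (((2:ℕ):ℝ)*x^1/2) x :=
    (hasDerivAt_pow 2 x).div_const 2
  have := (h1.sub h3).add_const k
  refine this.congr_deriv ?_
  field_simp
  ring

lemma cd_hasDerivAt_D (k x : ℝ) (hx : 1 - x^2 ≠ 0) :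
    HasDerivAt (fun y => y - 2*k*y/(1-y^2)^2) (1 - 2*k*(1+3*x^2)/(1-x^2)^3) x := by
  have h2 : HasDerivAt (fun y : ℝ => 1 - y^2) (0 - 2*x^1) x :=
    (hasDerivAt_const x 1).sub (hasDerivAt_pow 2 x)
  have h4 : HasDerivAt (fun y : ℝ => (1-y^2)^2) (2*(1-x^2)^1*(0 - 2*x^1)) x := h2.pow 2
  have h5 : HasDerivAt (fun y : ℝ => 2*k*y) (2*k*1) x := (hasDerivAt_id x).const_mul (2*k)
  have h6 : HasDerivAt (fun y : ℝ => 2*k*y/(1-y^2)^2)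
      ((2*k*1*(1-x^2)^2 - 2*k*x*(2*(1-x^2)^1*(0 - 2*x^1)))/((1-x^2)^2)^2) x :=
    h5.div h4 (pow_ne_zero 2 hx)
  have := (hasDerivAt_id x).sub h6
  refine this.congr_deriv ?_
  field_simp
  ring

lemma cd_key_pos (k x : ℝ) (hk : 0 < k) (hx : 0 < x) (hx1 : x^2 < 1)
    (hw : 2*k < (1-x^2)^2) :
    0 < (x - 2*k*x/(1-x^2)^2)^2
      - 2*(x^2/2 - k/(1-x^2) + k)*(1 - 2*k*(1+3*x^2)/(1-x^2)^3) := by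
  have hw0 : 0 < 1 - x^2 := by nlinarith
  have key : (x - 2*k*x/(1-x^2)^2)^2
      - 2*(x^2/2 - k/(1-x^2) + k)*(1 - 2*k*(1+3*x^2)/(1-x^2)^3)
      = (x^2 * (2*k) * x^2 * ((1-x^2)*(3+x^2) - 3*(2*k)))/(1-x^2)^4 := by
    field_simp
    ring
  rw [key]
  have hA : 0 < (1-x^2)*(3+x^2) - 3*(2*k) := by nlinarith
  have : 0 < x^2 := by positivity
  positivity


open Set MeasureTheory

lemma cd_beta_integrable :
    IntegrableOn (fun t : ℝ => (Real.sqrt (1-t))⁻¹ * (Real.sqrt t)⁻¹) (Set.Ioo 0 1) := by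
  have i1 : IntervalIntegrable (fun t : ℝ => t ^ (-(1/2) : ℝ)) volume 0 1 :=
    intervalIntegral.intervalIntegrable_rpow' (by norm_num)
  have i2 : IntervalIntegrable (fun t : ℝ => (1-t) ^ (-(1/2) : ℝ)) volume 0 1 := by
    have := (i1.comp_sub_left 1).symm
    simpa using this
  have isum := i1.add i2
  have hIoc : IntegrableOn
      (fun t : ℝ => t ^ (-(1/2) : ℝ) + (1-t) ^ (-(1/2) : ℝ)) (Set.Ioc 0 1) := by
    simpa [intervalIntegrable_iff_integrableOn_Ioc_of_le (by norm_num : (0:ℝ) ≤ 1)] using isum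
  have hIoo := hIoc.mono_set Set.Ioo_subset_Ioc_self
  have hBnd : IntegrableOn
      (fun t : ℝ => Real.sqrt 2 * (t ^ (-(1/2) : ℝ) + (1-t) ^ (-(1/2) : ℝ))) (Set.Ioo 0 1) :=
    hIoo.const_mul _
  apply hBnd.integrable.mono'
  · exact ((Real.continuous_sqrt.measurable.comp
      (measurable_const.sub measurable_id)).inv.mul
      Real.continuous_sqrt.measurable.inv).aestronglyMeasurable
  · rw [ae_restrict_iff' measurableSet_Ioo]
    filter_upwards with t ht
    obtain ⟨ht0, ht1⟩ := ht
    have h1t : 0 < 1 - t := by linarith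
    have e1 : (Real.sqrt t)⁻¹ = t ^ (-(1/2) : ℝ) := by
      rw [Real.rpow_neg ht0.le, Real.sqrt_eq_rpow]
    have e2 : (Real.sqrt (1-t))⁻¹ = (1-t) ^ (-(1/2) : ℝ) := by
      rw [Real.rpow_neg h1t.le, Real.sqrt_eq_rpow]
    have hp1 : (0:ℝ) < t ^ (-(1/2) : ℝ) := Real.rpow_pos_of_pos ht0 _
    have hp2 : (0:ℝ) < (1-t) ^ (-(1/2) : ℝ) := Real.rpow_pos_of_pos h1t _
    rw [Real.norm_eq_abs, abs_of_nonneg (by positivity), e1, e2]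
    rcases le_total t (1/2) with hc | hc
    · have hhalf : (1/2 : ℝ) ≤ 1 - t := by linarith
      have : (1-t) ^ (-(1/2) : ℝ) ≤ Real.sqrt 2 := by
        rw [← e2]
        rw [show Real.sqrt 2 = (Real.sqrt (1/2))⁻¹ by
          rw [← Real.sqrt_inv]; norm_num]
        exact inv_anti₀ (Real.sqrt_pos.mpr (by norm_num))
          (Real.sqrt_le_sqrt hhalf)
      calc (1-t) ^ (-(1/2) : ℝ) * t ^ (-(1/2) : ℝ)
          ≤ Real.sqrt 2 * t ^ (-(1/2) : ℝ) := by
            apply mul_le_mul_of_nonneg_right this hp1.le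
        _ ≤ Real.sqrt 2 * (t ^ (-(1/2) : ℝ) + (1-t) ^ (-(1/2) : ℝ)) := by
            apply mul_le_mul_of_nonneg_left _ (Real.sqrt_nonneg 2)
            linarith
    · have hhalf : (1/2 : ℝ) ≤ t := hc
      have : t ^ (-(1/2) : ℝ) ≤ Real.sqrt 2 := by
        rw [← e1]
        rw [show Real.sqrt 2 = (Real.sqrt (1/2))⁻¹ by
          rw [← Real.sqrt_inv]; norm_num]
        exact inv_anti₀ (Real.sqrt_pos.mpr (by norm_num))
          (Real.sqrt_le_sqrt hhalf)
      calc (1-t) ^ (-(1/2) : ℝ) * t ^ (-(1/2) : ℝ)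
          ≤ (1-t) ^ (-(1/2) : ℝ) * Real.sqrt 2 := by
            apply mul_le_mul_of_nonneg_left this hp2.le
        _ ≤ Real.sqrt 2 * (t ^ (-(1/2) : ℝ) + (1-t) ^ (-(1/2) : ℝ)) := by
            rw [mul_comm]
            apply mul_le_mul_of_nonneg_left _ (Real.sqrt_nonneg 2)
            linarith


open Set MeasureTheory

set_option maxHeartbeats 2000000 in
theorem combDrive_period_strictMono (β V₀ : ℝ) (hβ : 0 < β) (hV0 : 0 < V₀)
    (hV1 : V₀ < 1 / (2 * Real.sqrt β))
    (xstar : ℝ) (hxstar : xstar = Real.sqrt (1 - 2 * Real.sqrt β * V₀))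
    (E : ℝ → ℝ)
    (hE : ∀ x, E x = x ^ 2 / 2 - 2 * β * V₀ ^ 2 / (1 - x ^ 2) + 2 * β * V₀ ^ 2)
    (hstar : ℝ) (hhstar : hstar = E xstar)
    (xp : ℝ → ℝ)
    (hxp : ∀ ℏ ∈ Set.Ioo (0 : ℝ) hstar, xp ℏ ∈ Set.Ioo 0 xstar ∧ E (xp ℏ) = ℏ)
    (T : ℝ → ℝ)
    (hT : ∀ ℏ ∈ Set.Ioo (0 : ℝ) hstar,
      T ℏ = 2 * Real.sqrt 2 * ∫ x in (0 : ℝ)..(xp ℏ), (Real.sqrt (ℏ - E x))⁻¹) :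
    ∀ ℏ₁ ℏ₂ : ℝ, 0 < ℏ₁ → ℏ₁ < ℏ₂ → ℏ₂ < hstar → T ℏ₁ < T ℏ₂ := by
  intro ℏ₁ ℏ₂ h1pos h12 h2star
  set k := 2 * β * V₀ ^ 2 with hk_def
  have hk : 0 < k := by positivity
  have hsb : 0 < Real.sqrt β := Real.sqrt_pos.mpr hβ
  have hbv : 0 < 2 * Real.sqrt β * V₀ := by positivity
  have hbv1 : 2 * Real.sqrt β * V₀ < 1 := by
    have := (lt_div_iff₀ (by positivity : 0 < 2 * Real.sqrt β)).mp hV1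
    linarith [this]
  have hb2 : Real.sqrt β ^ 2 = β := Real.sq_sqrt hβ.le
  have hx2 : xstar ^ 2 = 1 - 2 * Real.sqrt β * V₀ := by
    rw [hxstar]; exact Real.sq_sqrt (by linarith)
  have hxs0 : 0 < xstar := by rw [hxstar]; exact Real.sqrt_pos.mpr (by linarith)
  have hxs1 : xstar < 1 := by nlinarith
  have hwstar : (1 - xstar ^ 2) ^ 2 = 2 * k := by
    rw [hx2, hk_def]; linear_combination (4 * V₀ ^ 2) * hb2
  set D : ℝ → ℝ := fun x => x - 2*k*x/(1-x^2)^2 with hD_def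
  set DD : ℝ → ℝ := fun x => 1 - 2*k*(1+3*x^2)/(1-x^2)^3 with hDD_def
  have hwpos : ∀ x ∈ Icc (0:ℝ) xstar, 0 < 1 - x ^ 2 := by
    intro x hx; nlinarith [hx.1, hx.2]
  have hEfun : E = fun y => y^2/2 - k/(1-y^2) + k := funext hE
  have hED : ∀ x ∈ Icc (0:ℝ) xstar, HasDerivAt E (D x) x := by
    intro x hx
    rw [hEfun, hD_def]
    exact cd_hasDerivAt_E k x (ne_of_gt (hwpos x hx))
  have hw2k : ∀ x ∈ Ioo (0:ℝ) xstar, 2*k < (1-x^2)^2 := by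
    intro x hx
    have h1 : 1 - xstar ^ 2 < 1 - x ^ 2 := by nlinarith [hx.1, hx.2]
    nlinarith [hwpos x ⟨hx.1.le, hx.2.le⟩, hwstar, hwpos xstar ⟨hxs0.le, le_refl _⟩]
  have hDpos : ∀ x ∈ Ioo (0:ℝ) xstar, 0 < D x := by
    intro x hx
    have hw := hwpos x ⟨hx.1.le, hx.2.le⟩
    have h2 := hw2k x hx
    have : D x = x * ((1-x^2)^2 - 2*k)/(1-x^2)^2 := by
      rw [hD_def]; field_simp
    rw [this]
    apply div_pos (mul_pos hx.1 (by linarith)) (by positivity)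
  have hcontE : ContinuousOn E (Icc 0 xstar) :=
    fun x hx => ((hED x hx).continuousAt).continuousWithinAt
  have hmonoE : StrictMonoOn E (Icc 0 xstar) := by
    apply strictMonoOn_of_deriv_pos (convex_Icc 0 xstar) hcontE
    intro x hx
    rw [interior_Icc] at hx
    rw [(hED x (Ioo_subset_Icc_self hx)).deriv]
    exact hDpos x hx
  have hE0 : E 0 = 0 := by rw [hE]; norm_num
  have hstarpos : 0 < hstar := by
    rw [hhstar, ← hE0]
    exact hmonoE ⟨le_refl 0, hxs0.le⟩ ⟨hxs0.le, le_refl _⟩ hxs0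
  have hEpos : ∀ x ∈ Ioo (0:ℝ) xstar, 0 < E x := by
    intro x hx
    rw [← hE0]
    exact hmonoE ⟨le_refl 0, hxs0.le⟩ ⟨hx.1.le, hx.2.le⟩ hx.1
  have hEmem : ∀ x ∈ Ioo (0:ℝ) xstar, E x ∈ Ioo 0 hstar := by
    intro x hx
    refine ⟨hEpos x hx, ?_⟩
    rw [hhstar]
    exact hmonoE ⟨hx.1.le, hx.2.le⟩ ⟨hxs0.le, le_refl _⟩ hx.2
  -- the inverse function
  set X : ℝ → ℝ := fun e => sSup {x | x ∈ Icc 0 xstar ∧ E x ≤ e} with hX_def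
  have hEnonneg : ∀ x ∈ Icc (0:ℝ) xstar, 0 ≤ E x := by
    intro x hx
    rw [← hE0]
    exact hmonoE.monotoneOn ⟨le_refl 0, hxs0.le⟩ hx hx.1
  have hXmono : Monotone X := by
    intro e1 e2 he
    simp only [hX_def]
    by_cases h1 : ∃ x, x ∈ Icc (0:ℝ) xstar ∧ E x ≤ e1
    · exact csSup_le_csSup ⟨xstar, fun y hy => hy.1.2⟩ h1
        (fun y hy => ⟨hy.1, hy.2.trans he⟩)
    · have hempty : {x | x ∈ Icc (0:ℝ) xstar ∧ E x ≤ e1} = ∅ := by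
        rw [Set.eq_empty_iff_forall_notMem]; intro y hy; exact h1 ⟨y, hy⟩
      rw [hempty, Real.sSup_empty]
      by_cases h2 : ∃ x, x ∈ Icc (0:ℝ) xstar ∧ E x ≤ e2
      · obtain ⟨y, hy⟩ := h2
        have h0mem : (0:ℝ) ∈ {x | x ∈ Icc (0:ℝ) xstar ∧ E x ≤ e2} := by
          refine ⟨⟨le_refl 0, hxs0.le⟩, ?_⟩
          rw [hE0]
          exact le_trans (hEnonneg y hy.1) hy.2
        exact le_csSup ⟨xstar, fun z hz => hz.1.2⟩ h0mem
      · have hempty2 : {x | x ∈ Icc (0:ℝ) xstar ∧ E x ≤ e2} = ∅ := by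
          rw [Set.eq_empty_iff_forall_notMem]; intro y hy; exact h2 ⟨y, hy⟩
        rw [hempty2, Real.sSup_empty]
  have hXval : ∀ e ∈ Ioo (0:ℝ) hstar, X e ∈ Ioo 0 xstar ∧ E (X e) = e := by
    intro e he
    have hsub : Ioo (E 0) (E xstar) ⊆ E '' Ioo 0 xstar :=
      intermediate_value_Ioo hxs0.le hcontE
    have hmem : e ∈ Ioo (E 0) (E xstar) := by
      rw [hE0, ← hhstar]; exact he
    obtain ⟨x0, hx0, hEx0⟩ := hsub hmem
    have hset : {x | x ∈ Icc (0:ℝ) xstar ∧ E x ≤ e} = Icc 0 x0 := by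
      ext y
      constructor
      · rintro ⟨hy, hEy⟩
        refine ⟨hy.1, ?_⟩
        by_contra hlt
        push_neg at hlt
        have := hmonoE ⟨hx0.1.le, hx0.2.le⟩ hy hlt
        rw [hEx0] at this
        linarith
      · intro hy
        have hyI : y ∈ Icc (0:ℝ) xstar := ⟨hy.1, hy.2.trans hx0.2.le⟩
        refine ⟨hyI, ?_⟩
        rw [← hEx0]
        exact hmonoE.monotoneOn hyI ⟨hx0.1.le, hx0.2.le⟩ hy.2
    have hXe : X e = x0 := by
      simp only [hX_def]; rw [hset]; exact csSup_Icc hx0.1.le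
    rw [hXe]
    exact ⟨hx0, hEx0⟩
  have hXEx : ∀ x ∈ Ioo (0:ℝ) xstar, X (E x) = x := by
    intro x hx
    obtain ⟨hXin, hXE⟩ := hXval _ (hEmem x hx)
    exact hmonoE.injOn ⟨hXin.1.le, hXin.2.le⟩ ⟨hx.1.le, hx.2.le⟩ hXE
  -- Phi and its strict monotonicity
  set Phi : ℝ → ℝ := fun x => Real.sqrt (E x) / D x with hPhi_def
  have hDD : ∀ x ∈ Icc (0:ℝ) xstar, HasDerivAt D (DD x) x := by
    intro x hx
    rw [hD_def, hDD_def]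
    exact cd_hasDerivAt_D k x (ne_of_gt (hwpos x hx))
  have hPhiD : ∀ x ∈ Ioo (0:ℝ) xstar,
      HasDerivAt Phi (((D x)^2 - 2*E x*DD x)/(2*Real.sqrt (E x)*(D x)^2)) x := by
    intro x hx
    have hxI : x ∈ Icc (0:ℝ) xstar := ⟨hx.1.le, hx.2.le⟩
    have hE' := hED x hxI
    have hD' := hDD x hxI
    have hEx := hEpos x hx
    have hDx := hDpos x hx
    have hsq : HasDerivAt (fun y => Real.sqrt (E y)) (1/(2*Real.sqrt (E x)) * D x) x :=
      (Real.hasDerivAt_sqrt (ne_of_gt hEx)).comp x hE'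
    have hdiv := hsq.div hD' (ne_of_gt hDx)
    have hPhieq : Phi = fun y => Real.sqrt (E y) / D y := hPhi_def
    rw [hPhieq]
    refine hdiv.congr_deriv ?_
    set s := Real.sqrt (E x) with hs_def
    have hss : s * s = E x := Real.mul_self_sqrt hEx.le
    have hsnz : s ≠ 0 := ne_of_gt (Real.sqrt_pos.mpr hEx)
    rw [← hss]
    field_simp
  have hPhiD_pos : ∀ x ∈ Ioo (0:ℝ) xstar,
      0 < ((D x)^2 - 2*E x*DD x)/(2*Real.sqrt (E x)*(D x)^2) := by
    intro x hx
    have hnum : 0 < (D x)^2 - 2*E x*DD x := by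
      have := cd_key_pos k x hk hx.1
        (by nlinarith [hwpos x ⟨hx.1.le, hx.2.le⟩] : x^2 < 1) (hw2k x hx)
      rw [hD_def, hDD_def, hE x]
      exact this
    have hs := Real.sqrt_pos.mpr (hEpos x hx)
    have hd := hDpos x hx
    exact div_pos hnum (by positivity)
  have hPhiMono : ∀ a ∈ Ioo (0:ℝ) xstar, ∀ b ∈ Ioo (0:ℝ) xstar, a < b → Phi a < Phi b := by
    intro a ha b hb hab
    have hsub : Icc a b ⊆ Ioo 0 xstar := fun y hy =>
      ⟨lt_of_lt_of_le ha.1 hy.1, lt_of_le_of_lt hy.2 hb.2⟩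
    have := strictMonoOn_of_deriv_pos (convex_Icc a b)
      (fun x hx => ((hPhiD x (hsub hx)).continuousAt).continuousWithinAt)
      (fun x hx => by
        rw [interior_Icc] at hx
        rw [(hPhiD x (hsub (Ioo_subset_Icc_self hx))).deriv]
        exact hPhiD_pos x (hsub (Ioo_subset_Icc_self hx)))
    exact this ⟨le_refl a, hab.le⟩ ⟨hab.le, le_refl b⟩ hab
  -- the increasing integrand kernel
  set hfun : ℝ → ℝ := fun e => Real.sqrt e / D (X e) with hfun_def
  have hfun_eq : ∀ e ∈ Ioo (0:ℝ) hstar, hfun e = Phi (X e) := by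
    intro e he
    obtain ⟨hXin, hXE⟩ := hXval e he
    rw [hfun_def, hPhi_def]
    simp only
    rw [hXE]
  have hXsm : ∀ e1 ∈ Ioo (0:ℝ) hstar, ∀ e2 ∈ Ioo (0:ℝ) hstar, e1 < e2 → X e1 < X e2 := by
    intro e1 he1 e2 he2 h12'
    obtain ⟨hX1, hE1⟩ := hXval e1 he1
    obtain ⟨hX2, hE2⟩ := hXval e2 he2
    by_contra hle
    push_neg at hle
    have := hmonoE.monotoneOn ⟨hX2.1.le, hX2.2.le⟩ ⟨hX1.1.le, hX1.2.le⟩ hle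
    rw [hE1, hE2] at this
    linarith
  have hfun_mono : ∀ e1 ∈ Ioo (0:ℝ) hstar, ∀ e2 ∈ Ioo (0:ℝ) hstar, e1 < e2 →
      hfun e1 < hfun e2 := by
    intro e1 he1 e2 he2 h12'
    rw [hfun_eq e1 he1, hfun_eq e2 he2]
    exact hPhiMono _ (hXval e1 he1).1 _ (hXval e2 he2).1 (hXsm e1 he1 e2 he2 h12')
  have hfun_pos : ∀ e ∈ Ioo (0:ℝ) hstar, 0 < hfun e := by
    intro e he
    rw [hfun_def]
    exact div_pos (Real.sqrt_pos.mpr he.1) (hDpos _ (hXval e he).1)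
  have hDmeas : Measurable D := by
    rw [hD_def]
    exact measurable_id.sub ((measurable_const.mul measurable_id).div
      ((measurable_const.sub (measurable_id.pow_const 2)).pow_const 2))
  have hfun_meas : Measurable hfun := by
    rw [hfun_def]
    exact Real.continuous_sqrt.measurable.div (hDmeas.comp hXmono.measurable)
  -- the transformed integrand
  set g : ℝ → ℝ → ℝ := fun e t => (Real.sqrt (1-t))⁻¹ * ((Real.sqrt t)⁻¹ * hfun (e*t))
    with hg_def
  have keyT : ∀ ℏ ∈ Ioo (0:ℝ) hstar, T ℏ = 2 * Real.sqrt 2 * ∫ t in Ioo (0:ℝ) 1, g ℏ t := by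
    intro ℏ hℏ
    obtain ⟨hxpin, hxpE⟩ := hxp ℏ hℏ
    have hℏne : ℏ ≠ 0 := ne_of_gt hℏ.1
    rw [hT ℏ hℏ, intervalIntegral.integral_of_le hxpin.1.le, integral_Ioc_eq_integral_Ioo]
    congr 1
    have hderiv : ∀ x ∈ Ioo (0:ℝ) (xp ℏ),
        HasDerivWithinAt (fun y => E y / ℏ) (D x / ℏ) (Ioo 0 (xp ℏ)) x := by
      intro x hx
      exact ((hED x ⟨hx.1.le, (hx.2.trans hxpin.2).le⟩).div_const ℏ).hasDerivWithinAt
    have hinj : InjOn (fun y => E y / ℏ) (Ioo 0 (xp ℏ)) := by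
      intro a ha b hb hab
      simp only at hab
      have hEab : E a = E b := by
        field_simp [hℏne] at hab
        exact hab
      exact hmonoE.injOn ⟨ha.1.le, (ha.2.trans hxpin.2).le⟩
        ⟨hb.1.le, (hb.2.trans hxpin.2).le⟩ hEab
    have himg : (fun y => E y / ℏ) '' (Ioo 0 (xp ℏ)) = Ioo 0 1 := by
      apply Subset.antisymm
      · rintro t ⟨x, hx, rfl⟩
        have hxs' : x ∈ Ioo 0 xstar := ⟨hx.1, hx.2.trans hxpin.2⟩
        have h1 : 0 < E x := hEpos x hxs'
        have h2 : E x < ℏ := by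
          rw [← hxpE]
          exact hmonoE ⟨hxs'.1.le, hxs'.2.le⟩ ⟨hxpin.1.le, hxpin.2.le⟩ hx.2
        exact ⟨div_pos h1 hℏ.1, (div_lt_one hℏ.1).mpr h2⟩
      · intro t ht
        have hmem : ℏ * t ∈ Ioo (E 0) (E (xp ℏ)) := by
          rw [hE0, hxpE]
          constructor
          · exact mul_pos hℏ.1 ht.1
          · nlinarith [hℏ.1, ht.2]
        have hsub2 : Ioo (E 0) (E (xp ℏ)) ⊆ E '' Ioo 0 (xp ℏ) :=
          intermediate_value_Ioo hxpin.1.le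
            (hcontE.mono (Icc_subset_Icc le_rfl hxpin.2.le))
        obtain ⟨x, hx, hEx⟩ := hsub2 hmem
        refine ⟨x, hx, ?_⟩
        simp only
        rw [hEx]
        exact mul_div_cancel_left₀ t hℏne
    have hsubst := integral_image_eq_integral_abs_deriv_smul measurableSet_Ioo hderiv hinj (g ℏ)
    rw [himg] at hsubst
    rw [hsubst]
    apply setIntegral_congr_fun measurableSet_Ioo
    intro x hx
    have hxs' : x ∈ Ioo 0 xstar := ⟨hx.1, hx.2.trans hxpin.2⟩
    have hEx1 : 0 < E x := hEpos x hxs'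
    have hEx2 : E x < ℏ := by
      rw [← hxpE]
      exact hmonoE ⟨hxs'.1.le, hxs'.2.le⟩ ⟨hxpin.1.le, hxpin.2.le⟩ hx.2
    have hDx := hDpos x hxs'
    have harg : ℏ * (E x / ℏ) = E x := by field_simp
    simp only [smul_eq_mul, hg_def]
    rw [harg, hfun_def]
    simp only
    rw [hXEx x hxs']
    rw [abs_of_pos (div_pos hDx hℏ.1)]
    have e1 : 1 - E x / ℏ = (ℏ - E x)/ℏ := by field_simp
    rw [e1, Real.sqrt_div (by linarith : (0:ℝ) ≤ ℏ - E x),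
      Real.sqrt_div hEx1.le]
    set a := Real.sqrt (ℏ - E x) with ha_def
    set b := Real.sqrt (E x) with hb_def
    set c := Real.sqrt ℏ with hc_def
    have ha0 : a ≠ 0 := ne_of_gt (Real.sqrt_pos.mpr (by linarith))
    have hb0 : b ≠ 0 := ne_of_gt (Real.sqrt_pos.mpr hEx1)
    have hc0 : c ≠ 0 := ne_of_gt (Real.sqrt_pos.mpr hℏ.1)
    have hc2 : c * c = ℏ := Real.mul_self_sqrt hℏ.1.le
    have hD0 : D x ≠ 0 := ne_of_gt hDx
    rw [← hc2]
    field_simp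
  -- integrability
  have hIntg : ∀ ℏ ∈ Ioo (0:ℝ) hstar, IntegrableOn (g ℏ) (Ioo 0 1) := by
    intro ℏ hℏ
    apply Integrable.mono' (Integrable.const_mul cd_beta_integrable (hfun ℏ))
    · rw [hg_def]
      apply Measurable.aestronglyMeasurable
      exact ((Real.continuous_sqrt.measurable.comp
        (measurable_const.sub measurable_id)).inv).mul
        ((Real.continuous_sqrt.measurable.inv).mul
          (hfun_meas.comp (measurable_id.const_mul ℏ)))
    · rw [ae_restrict_iff' measurableSet_Ioo]
      filter_upwards with t ht
      have ht0 := ht.1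
      have ht1 := ht.2
      have hmemt : ℏ * t ∈ Ioo (0:ℝ) hstar :=
        ⟨mul_pos hℏ.1 ht0, by nlinarith [hℏ.1, hℏ.2]⟩
      have hfm : hfun (ℏ * t) < hfun ℏ := hfun_mono _ hmemt _ hℏ (by nlinarith [hℏ.1])
      have hfp : 0 < hfun (ℏ * t) := hfun_pos _ hmemt
      have b1 : (0:ℝ) ≤ (Real.sqrt (1-t))⁻¹ := by positivity
      have b2 : (0:ℝ) ≤ (Real.sqrt t)⁻¹ := by positivity
      have base : (0:ℝ) ≤ (Real.sqrt (1-t))⁻¹ * (Real.sqrt t)⁻¹ := mul_nonneg b1 b2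
      rw [hg_def]
      simp only
      rw [Real.norm_eq_abs, abs_of_nonneg (mul_nonneg b1 (mul_nonneg b2 hfp.le))]
      have key := mul_le_mul_of_nonneg_left hfm.le base
      nlinarith [key]
  have h1m : ℏ₁ ∈ Ioo (0:ℝ) hstar := ⟨h1pos, h12.trans h2star⟩
  have h2m : ℏ₂ ∈ Ioo (0:ℝ) hstar := ⟨h1pos.trans h12, h2star⟩
  have hptpos : ∀ t ∈ Ioo (0:ℝ) 1, 0 < g ℏ₂ t - g ℏ₁ t := by
    intro t ht
    have hm1 : ℏ₁ * t ∈ Ioo (0:ℝ) hstar :=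
      ⟨mul_pos h1pos ht.1, by nlinarith [ht.2]⟩
    have hm2 : ℏ₂ * t ∈ Ioo (0:ℝ) hstar :=
      ⟨mul_pos (h1pos.trans h12) ht.1, by nlinarith [ht.2]⟩
    have hlt : hfun (ℏ₁ * t) < hfun (ℏ₂ * t) :=
      hfun_mono _ hm1 _ hm2 (by nlinarith [ht.1])
    have b1 : (0:ℝ) < (Real.sqrt (1-t))⁻¹ :=
      inv_pos.mpr (Real.sqrt_pos.mpr (by linarith [ht.2]))
    have b2 : (0:ℝ) < (Real.sqrt t)⁻¹ := inv_pos.mpr (Real.sqrt_pos.mpr ht.1)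
    rw [hg_def]
    simp only
    have step : (Real.sqrt t)⁻¹ * hfun (ℏ₁*t) < (Real.sqrt t)⁻¹ * hfun (ℏ₂*t) :=
      mul_lt_mul_of_pos_left hlt b2
    have := mul_lt_mul_of_pos_left step b1
    linarith
  have hdiffpos : 0 < ∫ t in Ioo (0:ℝ) 1, (g ℏ₂ t - g ℏ₁ t) := by
    have hnn : 0 ≤ᵐ[volume.restrict (Ioo (0:ℝ) 1)] fun t => g ℏ₂ t - g ℏ₁ t := by
      filter_upwards [ae_restrict_mem measurableSet_Ioo] with t ht
      exact (hptpos t ht).le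
    have hint : IntegrableOn (fun t => g ℏ₂ t - g ℏ₁ t) (Ioo (0:ℝ) 1) :=
      (hIntg ℏ₂ h2m).sub (hIntg ℏ₁ h1m)
    rw [MeasureTheory.setIntegral_pos_iff_support_of_nonneg_ae hnn hint]
    have hsup : Ioo (0:ℝ) 1 ⊆ Function.support (fun t => g ℏ₂ t - g ℏ₁ t) :=
      fun t ht => ne_of_gt (hptpos t ht)
    calc (0:ENNReal) < volume (Ioo (0:ℝ) 1) := by rw [Real.volume_Ioo]; norm_num
      _ ≤ volume (Function.support (fun t => g ℏ₂ t - g ℏ₁ t) ∩ Ioo 0 1) :=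
        measure_mono (subset_inter hsup subset_rfl)
  have hfinal : (∫ t in Ioo (0:ℝ) 1, g ℏ₁ t) < ∫ t in Ioo (0:ℝ) 1, g ℏ₂ t := by
    rw [integral_sub (hIntg ℏ₂ h2m) (hIntg ℏ₁ h1m)] at hdiffpos
    linarith
  rw [keyT ℏ₁ h1m, keyT ℏ₂ h2m]
  have h2s : 0 < 2 * Real.sqrt 2 := by positivity
  exact (mul_lt_mul_iff_right₀ h2s).mpr hfinal
end

section
/- Let β > 0 and 0 < V₀ < 1/(2√β), and let T(ℏ) be the period function of the autonomous comb-drive equation. Then for every ℏ ∈ (0, ℏ*) one has T(ℏ) > 2π/√(1 − 4βV₀²). -/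
set_option maxHeartbeats 2000000

open MeasureTheory Set

lemma aux_sqrt_inv_integrable (b m : ℝ) (hb : 0 < b) (hm : 0 < m)
    (F : ℝ → ℝ) (hFm : Measurable F) (hFb : F b = 0)
    (hF : ∀ x ∈ Set.Ioc (0:ℝ) b, m * (b - x) ≤ F x) :
    IntervalIntegrable (fun x => (Real.sqrt (F x))⁻¹) volume 0 b := by
  have h1 : IntervalIntegrable (fun x : ℝ => x ^ (-(1/2) : ℝ)) volume 0 b :=
    intervalIntegral.intervalIntegrable_rpow' (by norm_num)
  have hdom : IntervalIntegrable
      (fun x => (Real.sqrt m)⁻¹ * (b - x) ^ (-(1/2) : ℝ)) volume 0 b := by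
    simpa using ((h1.comp_sub_left b).const_mul (Real.sqrt m)⁻¹).symm
  refine hdom.mono_fun' ?_ ?_
  · exact ((Real.continuous_sqrt.measurable.comp hFm).inv).aestronglyMeasurable.restrict
  · rw [Set.uIoc_of_le hb.le]
    refine MeasureTheory.ae_restrict_of_forall_mem measurableSet_Ioc ?_
    intro x hx
    rcases eq_or_lt_of_le hx.2 with rfl | h
    · simp [hFb, Real.zero_rpow (by norm_num : (-(1/2) : ℝ) ≠ 0)]
    · have hbx : 0 < b - x := by linarith
      have hpos : 0 < m * (b - x) := by positivity
      have hFx : m * (b - x) ≤ F x := hF x hx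
      have hle : Real.sqrt (m * (b-x)) ≤ Real.sqrt (F x) := Real.sqrt_le_sqrt hFx
      have h2 : 0 < Real.sqrt (m * (b-x)) := Real.sqrt_pos.2 hpos
      have h3 : (Real.sqrt (F x))⁻¹ ≤ (Real.sqrt (m * (b-x)))⁻¹ :=
        inv_anti₀ h2 hle
      calc ‖(Real.sqrt (F x))⁻¹‖ = (Real.sqrt (F x))⁻¹ :=
            Real.norm_of_nonneg (by positivity)
        _ ≤ (Real.sqrt (m * (b-x)))⁻¹ := h3
        _ = (Real.sqrt m)⁻¹ * (b - x) ^ (-(1/2) : ℝ) := by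
            rw [Real.sqrt_mul hm.le, mul_inv, Real.rpow_neg hbx.le, ← Real.sqrt_eq_rpow]

theorem combDrive_period_lower_bound (β V₀ : ℝ) (hβ : 0 < β) (hV0 : 0 < V₀)
    (hV1 : V₀ < 1 / (2 * Real.sqrt β))
    (xstar : ℝ) (hxstar : xstar = Real.sqrt (1 - 2 * Real.sqrt β * V₀))
    (E : ℝ → ℝ)
    (hE : ∀ x, E x = x ^ 2 / 2 - 2 * β * V₀ ^ 2 / (1 - x ^ 2) + 2 * β * V₀ ^ 2)
    (hstar : ℝ) (hhstar : hstar = E xstar)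
    (xp : ℝ → ℝ)
    (hxp : ∀ ℏ ∈ Set.Ioo (0 : ℝ) hstar, xp ℏ ∈ Set.Ioo 0 xstar ∧ E (xp ℏ) = ℏ)
    (T : ℝ → ℝ)
    (hT : ∀ ℏ ∈ Set.Ioo (0 : ℝ) hstar,
      T ℏ = 2 * Real.sqrt 2 * ∫ x in (0 : ℝ)..(xp ℏ), (Real.sqrt (ℏ - E x))⁻¹) :
    ∀ ℏ ∈ Set.Ioo (0 : ℝ) hstar, T ℏ > 2 * Real.pi / Real.sqrt (1 - 4 * β * V₀ ^ 2) := by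
  intro ℏ hℏ
  obtain ⟨hℏ0, hℏs⟩ := hℏ
  have hTval := hT ℏ ⟨hℏ0, hℏs⟩
  obtain ⟨hbmem, hEb⟩ := hxp ℏ ⟨hℏ0, hℏs⟩
  set b := xp ℏ with hbdef
  clear_value b
  obtain ⟨hb0, hbx⟩ := hbmem
  have hsβ : 0 < Real.sqrt β := Real.sqrt_pos.2 hβ
  have hsβ2 : Real.sqrt β ^ 2 = β := Real.sq_sqrt hβ.le
  have h2sV : 2 * Real.sqrt β * V₀ < 1 := by
    have h := (lt_div_iff₀ (by positivity : (0:ℝ) < 2 * Real.sqrt β)).1 hV1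
    linarith
  have h2sVpos : 0 < 2 * Real.sqrt β * V₀ := by positivity
  have hω2pos : 0 < 1 - 4 * β * V₀ ^ 2 := by nlinarith
  set ω := Real.sqrt (1 - 4 * β * V₀ ^ 2) with hωdef
  clear_value ω
  have hω : 0 < ω := hωdef ▸ Real.sqrt_pos.2 hω2pos
  have hω2 : ω ^ 2 = 1 - 4 * β * V₀ ^ 2 := hωdef ▸ Real.sq_sqrt hω2pos.le
  have hxstar2 : xstar ^ 2 = 1 - 2 * Real.sqrt β * V₀ := by
    rw [hxstar]; exact Real.sq_sqrt (by linarith)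
  have hxstar0 : 0 ≤ xstar := by rw [hxstar]; exact Real.sqrt_nonneg _
  have hxstar1 : xstar < 1 := by nlinarith [sq_nonneg (xstar - 1)]
  have hb1 : b < 1 := lt_trans hbx hxstar1
  have h1b : 0 < 1 - b ^ 2 := by nlinarith
  have h1bs : 2 * Real.sqrt β * V₀ < 1 - b ^ 2 := by nlinarith
  -- difference formula
  have hB : ∀ x : ℝ, 0 ≤ x → x ≤ b →
      ℏ - E x = (b ^ 2 - x ^ 2) * (1/2 - 2 * β * V₀ ^ 2 / ((1 - b ^ 2) * (1 - x ^ 2))) := by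
    intro x hx0 hxb
    have h1x : 0 < 1 - x ^ 2 := by nlinarith
    rw [← hEb, hE, hE]
    field_simp [h1x.ne', h1b.ne']
    ring
  have hkey : 4 * β * V₀ ^ 2 < (1 - b ^ 2) ^ 2 := by nlinarith
  set c : ℝ := 1/2 - 2 * β * V₀ ^ 2 / (1 - b ^ 2) ^ 2 with hcdef
  clear_value c
  have hc : 0 < c := by
    rw [hcdef, sub_pos, div_lt_iff₀ (by positivity)]
    nlinarith
  -- lower bound on ℏ - E x
  have hlo : ∀ x ∈ Set.Ioc (0:ℝ) b, c * b * (b - x) ≤ ℏ - E x := by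
    intro x hx
    obtain ⟨hx0, hxb⟩ := hx
    have h1x : 0 < 1 - x ^ 2 := by nlinarith
    have hxx : x ^ 2 ≤ b ^ 2 := by nlinarith
    have hden : (1 - b ^ 2) ^ 2 ≤ (1 - b ^ 2) * (1 - x ^ 2) := by
      nlinarith [mul_nonneg h1b.le (sub_nonneg.2 hxx)]
    have hQ : 2 * β * V₀ ^ 2 / ((1 - b ^ 2) * (1 - x ^ 2)) ≤ 2 * β * V₀ ^ 2 / (1 - b ^ 2) ^ 2 := by
      rw [div_le_div_iff₀ (by positivity) (by positivity)]
      nlinarith [mul_le_mul_of_nonneg_left hden (by positivity : (0:ℝ) ≤ 2 * β * V₀ ^ 2)]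
    have hbr : c ≤ 1/2 - 2 * β * V₀ ^ 2 / ((1 - b ^ 2) * (1 - x ^ 2)) := by
      rw [hcdef]; linarith
    have hbx2 : b * (b - x) ≤ b ^ 2 - x ^ 2 := by nlinarith
    rw [hB x hx0.le hxb]
    have h1 : 0 ≤ b - x := by linarith
    have h2 : 0 ≤ b ^ 2 - x ^ 2 := by nlinarith
    nlinarith [mul_nonneg (sub_nonneg.2 hbr) h2, mul_nonneg hc.le (sub_nonneg.2 hbx2)]
  -- strict upper bound on ℏ - E x
  have hup : ∀ x : ℝ, 0 ≤ x → x < b → ℏ - E x < (1 - 4*β*V₀^2) * (b^2 - x^2) / 2 := by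
    intro x hx0 hxb
    have h1x : 0 < 1 - x ^ 2 := by nlinarith
    have hDpos : 0 < (1 - b^2) * (1 - x^2) := mul_pos h1b h1x
    have hD1 : (1 - b^2) * (1 - x^2) < 1 := by
      nlinarith [mul_pos (mul_pos hb0 hb0) h1x, sq_nonneg x]
    have h2b : (0:ℝ) < 2*β*V₀^2 := by positivity
    have hQ : 2*β*V₀^2 < 2*β*V₀^2 / ((1-b^2)*(1-x^2)) := by
      rw [lt_div_iff₀ hDpos]
      nlinarith [mul_lt_mul_of_pos_left hD1 h2b]
    have hbx2 : 0 < b^2 - x^2 := by nlinarith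
    rw [hB x hx0 hxb.le]
    nlinarith [mul_pos hbx2 (sub_pos.2 hQ)]
  -- integrability of f
  have hFm : Measurable fun x : ℝ => ℏ - E x := by
    have hEfun : E = fun x => x^2/2 - 2*β*V₀^2/(1-x^2) + 2*β*V₀^2 := funext hE
    rw [hEfun]
    fun_prop
  have hfint : IntervalIntegrable (fun x => (Real.sqrt (ℏ - E x))⁻¹) volume 0 b := by
    exact aux_sqrt_inv_integrable b (c*b) hb0 (by positivity) (fun x => ℏ - E x) hFm
      (by show ℏ - E b = 0; rw [hEb]; ring) hlo
  -- integrability of g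
  have hgpt : ∀ x ∈ Set.Ioc (0:ℝ) b,
      (1-4*β*V₀^2)*b/2 * (b - x) ≤ (1-4*β*V₀^2)*(b^2-x^2)/2 := by
    intro x hx
    nlinarith [mul_nonneg hx.1.le (sub_nonneg.2 hx.2)]
  have hgint : IntervalIntegrable
      (fun x => (Real.sqrt ((1-4*β*V₀^2)*(b^2-x^2)/2))⁻¹) volume 0 b := by
    exact aux_sqrt_inv_integrable b ((1-4*β*V₀^2)*b/2) hb0 (by positivity)
      (fun x => (1-4*β*V₀^2)*(b^2-x^2)/2) (by fun_prop)
      (by show (1-4*β*V₀^2)*(b^2-b^2)/2 = 0; ring) hgpt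
  -- pointwise strict comparison
  have hfg : ∀ x ∈ Set.Ioo (0:ℝ) b,
      (Real.sqrt ((1-4*β*V₀^2)*(b^2-x^2)/2))⁻¹ < (Real.sqrt (ℏ - E x))⁻¹ := by
    intro x hx
    have h1 : 0 < ℏ - E x :=
      lt_of_lt_of_le (mul_pos (mul_pos hc hb0) (sub_pos.2 hx.2))
        (hlo x ⟨hx.1, hx.2.le⟩)
    have h2 := hup x hx.1.le hx.2
    have hs1 : 0 < Real.sqrt (ℏ - E x) := Real.sqrt_pos.2 h1
    exact inv_strictAnti₀ hs1 (Real.sqrt_lt_sqrt h1.le h2)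
  -- strict positivity of the difference integral
  have hsub_pos : 0 < ∫ x in (0:ℝ)..b,
      ((Real.sqrt (ℏ - E x))⁻¹ - (Real.sqrt ((1-4*β*V₀^2)*(b^2-x^2)/2))⁻¹) := by
    apply intervalIntegral.intervalIntegral_pos_of_pos_on (hfint.sub hgint)
      (fun x hx => sub_pos.2 (hfg x hx)) hb0
  have hsplit : (∫ x in (0:ℝ)..b, (Real.sqrt (ℏ - E x))⁻¹)
      = (∫ x in (0:ℝ)..b, (Real.sqrt ((1-4*β*V₀^2)*(b^2-x^2)/2))⁻¹)
        + ∫ x in (0:ℝ)..b,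
          ((Real.sqrt (ℏ - E x))⁻¹ - (Real.sqrt ((1-4*β*V₀^2)*(b^2-x^2)/2))⁻¹) := by
    rw [intervalIntegral.integral_sub hfint hgint]
    ring
  -- lower bound on the model integral via arcsin antiderivative
  have harc : ∀ t ∈ Set.Ioo (0:ℝ) b,
      Real.sqrt 2 / ω * Real.arcsin (t / b)
        ≤ ∫ x in (0:ℝ)..b, (Real.sqrt ((1-4*β*V₀^2)*(b^2-x^2)/2))⁻¹ := by
    intro t ht
    have hderiv : ∀ x ∈ Set.uIcc (0:ℝ) t,
        HasDerivAt (fun y => Real.sqrt 2 / ω * Real.arcsin (y / b))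
          ((Real.sqrt ((1-4*β*V₀^2)*(b^2-x^2)/2))⁻¹) x := by
      intro x hx
      rw [Set.uIcc_of_le ht.1.le] at hx
      have hx0 : 0 ≤ x := hx.1
      have hxb : x < b := lt_of_le_of_lt hx.2 ht.2
      have hbx2 : 0 < b^2 - x^2 := by nlinarith
      have hs : 0 < Real.sqrt (b^2 - x^2) := Real.sqrt_pos.2 hbx2
      have h1 : x / b ≠ -1 := by
        have : 0 ≤ x / b := by positivity
        linarith [this]
      have h2 : x / b ≠ 1 := ne_of_lt (by rw [div_lt_one hb0]; exact hxb)
      have hda := ((Real.hasDerivAt_arcsin h1 h2).comp x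
        ((hasDerivAt_id x).div_const b)).const_mul (Real.sqrt 2 / ω)
      have e1 : 1 - (x/b)^2 = (b^2-x^2)/b^2 := by field_simp
      have e2 : Real.sqrt (1 - (x/b)^2) = Real.sqrt (b^2-x^2) / b := by
        rw [e1, Real.sqrt_div hbx2.le, Real.sqrt_sq hb0.le]
      have e3 : (1 - 4*β*V₀^2) * (b^2-x^2)/2
          = (ω * Real.sqrt (b^2-x^2) / Real.sqrt 2)^2 := by
        rw [div_pow, mul_pow, hω2, Real.sq_sqrt hbx2.le, Real.sq_sqrt (by norm_num : (0:ℝ) ≤ 2)]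
      have key : Real.sqrt 2 / ω * (1 / Real.sqrt (1 - (x/b)^2) * (1 / b))
          = (Real.sqrt ((1-4*β*V₀^2)*(b^2-x^2)/2))⁻¹ := by
        rw [e2, e3, Real.sqrt_sq (by positivity)]
        have hs2 : (0:ℝ) < Real.sqrt 2 := by positivity
        field_simp
      rw [key] at hda
      exact hda
    have hgt : IntervalIntegrable
        (fun x => (Real.sqrt ((1-4*β*V₀^2)*(b^2-x^2)/2))⁻¹) volume 0 t := by
      apply hgint.mono_set
      rw [Set.uIcc_of_le ht.1.le, Set.uIcc_of_le hb0.le]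
      exact Set.Icc_subset_Icc le_rfl ht.2.le
    have htb : IntervalIntegrable
        (fun x => (Real.sqrt ((1-4*β*V₀^2)*(b^2-x^2)/2))⁻¹) volume t b := by
      apply hgint.mono_set
      rw [Set.uIcc_of_le ht.2.le, Set.uIcc_of_le hb0.le]
      exact Set.Icc_subset_Icc ht.1.le le_rfl
    have hftc := intervalIntegral.integral_eq_sub_of_hasDerivAt hderiv hgt
    have hnn : 0 ≤ ∫ x in t..b, (Real.sqrt ((1-4*β*V₀^2)*(b^2-x^2)/2))⁻¹ :=
      intervalIntegral.integral_nonneg ht.2.le (fun u _ => by positivity)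
    have hadd := intervalIntegral.integral_add_adjacent_intervals hgt htb
    rw [hftc] at hadd
    simp only [zero_div, Real.arcsin_zero, mul_zero] at hadd
    linarith [hadd, hnn]
  -- limit t → b⁻
  have htend : Filter.Tendsto (fun t => Real.sqrt 2 / ω * Real.arcsin (t / b))
      (nhdsWithin b (Set.Iio b)) (nhds (Real.sqrt 2 / ω * (Real.pi/2))) := by
    have hcont : Continuous fun t : ℝ => Real.sqrt 2 / ω * Real.arcsin (t / b) :=
      continuous_const.mul (Real.continuous_arcsin.comp (continuous_id.div_const b))
    have h0 : Real.sqrt 2 / ω * Real.arcsin (b / b) = Real.sqrt 2 / ω * (Real.pi/2) := by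
      rw [div_self hb0.ne', Real.arcsin_one]
    have h1 : Filter.Tendsto (fun t => Real.sqrt 2 / ω * Real.arcsin (t / b))
        (nhdsWithin b (Set.Iio b)) (nhds (Real.sqrt 2 / ω * Real.arcsin (b / b))) :=
      (hcont.tendsto b).mono_left nhdsWithin_le_nhds
    rwa [h0] at h1
  have hglb : Real.sqrt 2 / ω * (Real.pi/2)
      ≤ ∫ x in (0:ℝ)..b, (Real.sqrt ((1-4*β*V₀^2)*(b^2-x^2)/2))⁻¹ := by
    refine le_of_tendsto htend ?_
    filter_upwards [Ioo_mem_nhdsLT_of_mem (⟨hb0, le_rfl⟩ : b ∈ Set.Ioc 0 b)] with t ht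
    exact harc t ht
  -- assemble
  have hs2 : Real.sqrt 2 * Real.sqrt 2 = 2 := Real.mul_self_sqrt (by norm_num)
  have hI : Real.sqrt 2 / ω * (Real.pi/2) < ∫ x in (0:ℝ)..b, (Real.sqrt (ℏ - E x))⁻¹ := by
    rw [hsplit]; linarith
  have heq : 2 * Real.sqrt 2 * (Real.sqrt 2 / ω * (Real.pi/2)) = 2 * Real.pi / ω := by
    have : 2 * Real.sqrt 2 * (Real.sqrt 2 / ω * (Real.pi/2))
        = (Real.sqrt 2 * Real.sqrt 2) * (Real.pi / ω) := by ring
    rw [this, hs2]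
    ring
  rw [gt_iff_lt, hTval, ← heq]
  have hs2pos : (0:ℝ) < 2 * Real.sqrt 2 := by positivity
  exact mul_lt_mul_of_pos_left hI hs2pos
end

section
/- Let β > 0 and 0 < V₀ < 1/(2√β), and let T(ℏ) be the period function of the autonomous comb-drive equation. Then for every τ > 2π/√(1 − 4βV₀²) there exists a unique ℏ ∈ (0, ℏ*) with T(ℏ) = τ. -/
open Real Set MeasureTheory intervalIntegral

set_option maxHeartbeats 2000000

noncomputable def CDgg (a b θ : ℝ) : ℝ :=
  Real.sqrt ((1 - a * Real.sin θ ^ 2) / (b - a * Real.sin θ ^ 2))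

noncomputable def CDJ (a b : ℝ) : ℝ := ∫ θ in (0:ℝ)..(π/2), CDgg a b θ

noncomputable def CDA (c ℏ : ℝ) : ℝ := (c + 2*ℏ - Real.sqrt ((c + 2*ℏ)^2 - 8*ℏ))/2
noncomputable def CDB (c ℏ : ℝ) : ℝ := (c + 2*ℏ + Real.sqrt ((c + 2*ℏ)^2 - 8*ℏ))/2

lemma CDgg_continuous {a b : ℝ} (ha : 0 < a) (hab : a < b) :
    Continuous (CDgg a b) := by
  apply Real.continuous_sqrt.comp
  apply Continuous.div (by continuity) (by continuity)
  intro θ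
  have h1 : Real.sin θ ^ 2 ≤ 1 := Real.sin_sq_le_one θ
  nlinarith

set_option maxHeartbeats 1000000 in
lemma CD_roots (c m ℏ : ℝ) (hm0 : 0 < m) (hm1 : m < 1) (hc : c = m * (2 - m))
    (hh0 : 0 < ℏ) (hh1 : ℏ < m^2/2) :
    0 < CDA c ℏ ∧ CDA c ℏ < m ∧ m < CDB c ℏ ∧ CDB c ℏ < 1 ∧
      CDA c ℏ + CDB c ℏ = c + 2*ℏ ∧ CDA c ℏ * CDB c ℏ = 2*ℏ := by
  have hDe : (c + 2*ℏ)^2 - 8*ℏ = (m^2 - 2*ℏ)*((2-m)^2 - 2*ℏ) := by rw [hc]; ring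
  have hD : 0 < (c + 2*ℏ)^2 - 8*ℏ := by
    rw [hDe]; apply mul_pos <;> nlinarith
  have hs := Real.sq_sqrt hD.le
  have hrpos := Real.sqrt_pos.mpr hD
  set r := Real.sqrt ((c + 2*ℏ)^2 - 8*ℏ) with hr
  have hsum : CDA c ℏ + CDB c ℏ = c + 2*ℏ := by unfold CDA CDB; ring
  have hprod : CDA c ℏ * CDB c ℏ = 2*ℏ := by
    unfold CDA CDB
    rw [div_mul_div_comm]
    rw [show (c + 2*ℏ - r) * (c + 2*ℏ + r) = (c + 2*ℏ)^2 - r^2 by ring, hs]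
    ring
  have hAB : CDA c ℏ < CDB c ℏ := by unfold CDA CDB; linarith
  have hquad : (m - CDA c ℏ) * (m - CDB c ℏ) = (1 - m) * (2*ℏ - m^2) := by
    have : (m - CDA c ℏ) * (m - CDB c ℏ)
        = m^2 - (CDA c ℏ + CDB c ℏ)*m + CDA c ℏ * CDB c ℏ := by ring
    rw [this, hsum, hprod, hc]; ring
  have hquadneg : (m - CDA c ℏ) * (m - CDB c ℏ) < 0 := by rw [hquad]; nlinarith
  have hAm : CDA c ℏ < m := by nlinarith
  have hmB : m < CDB c ℏ := by nlinarith
  have hApos : 0 < CDA c ℏ := by nlinarith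
  have hB1 : CDB c ℏ < 1 := by
    have hone : (1 - CDA c ℏ) * (1 - CDB c ℏ) = 1 - c := by
      have : (1 - CDA c ℏ) * (1 - CDB c ℏ)
          = 1 - (CDA c ℏ + CDB c ℏ) + CDA c ℏ * CDB c ℏ := by ring
      rw [this, hsum, hprod]; ring
    have hc1 : c < 1 := by rw [hc]; nlinarith
    by_contra hcon
    push_neg at hcon
    have h1A : (0:ℝ) ≤ 1 - CDA c ℏ := by linarith
    have h1B : (0:ℝ) ≤ CDB c ℏ - 1 := by linarith
    nlinarith [mul_nonneg h1A h1B]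
  exact ⟨hApos, hAm, hmB, hB1, hsum, hprod⟩

lemma CDJ_le {a b : ℝ} (ha : 0 < a) (hab : a < b) :
    CDJ a b ≤ π/2 * Real.sqrt (1/(b-a)) := by
  have hπ : (0:ℝ) < π/2 := by positivity
  have hmono : ∀ θ ∈ Icc (0:ℝ) (π/2), CDgg a b θ ≤ Real.sqrt (1/(b-a)) := by
    intro θ _
    apply Real.sqrt_le_sqrt
    have h1 : Real.sin θ ^ 2 ≤ 1 := Real.sin_sq_le_one θ
    have h2 : 0 ≤ Real.sin θ ^ 2 := sq_nonneg _
    rw [div_le_div_iff₀ (by nlinarith) (by linarith)]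
    nlinarith [mul_nonneg (mul_nonneg ha.le h2) (sub_pos.mpr hab).le,
      mul_nonneg ha.le (sub_nonneg.mpr h1)]
  have h2 := intervalIntegral.integral_mono_on (μ := volume) hπ.le
    ((CDgg_continuous ha hab).intervalIntegrable _ _)
    (intervalIntegrable_const) hmono
  rw [intervalIntegral.integral_const] at h2
  simp only [sub_zero, smul_eq_mul] at h2
  exact h2

lemma CDJ_ge {a b m' : ℝ} (ha : 0 < a) (ham : a < m') (hm1 : m' < 1) (hab : a < b)
    (hb1 : b < 1) :
    Real.sqrt (1 - m') *
      (Real.log (Real.sqrt (b - a) + π/2) - Real.log (Real.sqrt (b - a))) ≤ CDJ a b := by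
  have hπ : (0:ℝ) < π/2 := by positivity
  set ε := Real.sqrt (b - a) with hε
  have hεpos : 0 < ε := Real.sqrt_pos.mpr (by linarith)
  have hεsq : ε^2 = b - a := Real.sq_sqrt (by linarith)
  have ha1 : a < 1 := ham.trans hm1
  have hsa1 : Real.sqrt a ≤ 1 := by
    rw [show (1:ℝ) = Real.sqrt 1 by simp]
    exact Real.sqrt_le_sqrt ha1.le
  have hmono : ∀ θ ∈ Icc (0:ℝ) (π/2),
      Real.sqrt (1 - m') * (ε + (π/2 - θ))⁻¹ ≤ CDgg a b θ := by
    intro θ hθ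
    have hcos0 : 0 ≤ Real.cos θ :=
      Real.cos_nonneg_of_mem_Icc ⟨by linarith [hθ.1, hπ], hθ.2⟩
    have hsc := Real.sin_sq_add_cos_sq θ
    have hs1 : Real.sin θ ^ 2 ≤ 1 := Real.sin_sq_le_one θ
    have hnum : (0:ℝ) < 1 - m' := by linarith
    have hnumθ : 1 - m' ≤ 1 - a * Real.sin θ ^ 2 := by nlinarith
    have hden : 0 < b - a * Real.sin θ ^ 2 := by nlinarith
    -- bound the sqrt of the denominator
    have hcossin : Real.cos θ ≤ π/2 - θ := by
      have := Real.sin_le (by linarith [hθ.2] : (0:ℝ) ≤ π/2 - θ)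
      rwa [Real.sin_pi_div_two_sub] at this
    have hsqden : Real.sqrt (b - a * Real.sin θ ^ 2) ≤ ε + (π/2 - θ) := by
      have e1 : b - a * Real.sin θ ^ 2 = (b - a) + a * Real.cos θ ^ 2 := by nlinarith
      rw [e1]
      calc Real.sqrt ((b - a) + a * Real.cos θ ^ 2)
          ≤ Real.sqrt (b - a) + Real.sqrt (a * Real.cos θ ^ 2) := by
            have hx : (0:ℝ) ≤ b - a := by linarith
            have hy : (0:ℝ) ≤ a * Real.cos θ ^ 2 := by positivity
            nlinarith [Real.sq_sqrt hx, Real.sq_sqrt hy, Real.sqrt_nonneg (b-a),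
              Real.sqrt_nonneg (a * Real.cos θ ^ 2),
              Real.sq_sqrt (by positivity : (0:ℝ) ≤ (b-a) + a * Real.cos θ ^2),
              Real.sqrt_nonneg ((b-a) + a * Real.cos θ ^2),
              mul_nonneg (Real.sqrt_nonneg (b-a)) (Real.sqrt_nonneg (a * Real.cos θ ^ 2))]
        _ ≤ ε + (π/2 - θ) := by
            apply add_le_add le_rfl
            rw [Real.sqrt_mul ha.le, Real.sqrt_sq hcos0]
            calc Real.sqrt a * Real.cos θ ≤ 1 * Real.cos θ := by
                  apply mul_le_mul_of_nonneg_right hsa1 hcos0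
              _ = Real.cos θ := by ring
              _ ≤ π/2 - θ := hcossin
    -- combine
    have hCD : CDgg a b θ = Real.sqrt (1 - a * Real.sin θ ^ 2) /
        Real.sqrt (b - a * Real.sin θ ^ 2) := by
      unfold CDgg
      rw [Real.sqrt_div (by nlinarith)]
    rw [hCD, ← div_eq_mul_inv]
    exact div_le_div₀ (Real.sqrt_nonneg _) (Real.sqrt_le_sqrt hnumθ)
      (Real.sqrt_pos.mpr hden) hsqden
  have hint1 : IntervalIntegrable (fun θ => Real.sqrt (1-m') * (ε + (π/2 - θ))⁻¹)
      volume 0 (π/2) := by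
    apply ContinuousOn.intervalIntegrable
    apply ContinuousOn.mul continuousOn_const
    apply ContinuousOn.inv₀ (by fun_prop)
    intro θ hθ
    rw [uIcc_of_le hπ.le] at hθ
    have := hθ.2
    nlinarith [hεpos]
  have hmono' := intervalIntegral.integral_mono_on hπ.le hint1
    ((CDgg_continuous ha hab).intervalIntegrable _ _) hmono
  have hcalc : ∫ θ in (0:ℝ)..(π/2), Real.sqrt (1-m') * (ε + (π/2 - θ))⁻¹
      = Real.sqrt (1-m') * (Real.log (ε + π/2) - Real.log ε) := by
    rw [intervalIntegral.integral_const_mul]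
    congr 1
    calc ∫ θ in (0:ℝ)..(π/2), (ε + (π/2 - θ))⁻¹
        = ∫ u in (π/2 - π/2)..(π/2 - 0), (ε + u)⁻¹ :=
          intervalIntegral.integral_comp_sub_left (fun u => (ε + u)⁻¹) (π/2)
      _ = ∫ u in (0:ℝ)..(π/2), (ε + u)⁻¹ := by norm_num
      _ = ∫ u in (0:ℝ)..(π/2), (u + ε)⁻¹ := by simp_rw [add_comm]
      _ = ∫ u in (0+ε)..(π/2+ε), u⁻¹ :=
          (intervalIntegral.integral_comp_add_right (fun u => u⁻¹) ε)
      _ = Real.log ((π/2+ε)/(0+ε)) := by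
          apply integral_inv
          intro hmem
          rw [uIcc_of_le (by linarith)] at hmem
          nlinarith [hmem.1]
      _ = Real.log (ε + π/2) - Real.log ε := by
          rw [zero_add, Real.log_div (by positivity) (by positivity)]
          ring_nf
  rw [hcalc] at hmono'
  exact hmono'

lemma CD_key_ineq (c a₁ b₁ a₂ b₂ s : ℝ) (hc : c < 1)
    (ha1 : 0 < a₁) (h12 : a₁ < a₂) (ha2 : a₂ < 1) (ha2b : a₂ < b₂) (hb1 : b₁ < 1)
    (hrel1 : b₁ * (1 - a₁) = c - a₁) (hrel2 : b₂ * (1 - a₂) = c - a₂)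
    (hs0 : 0 ≤ s) (hs1 : s ≤ 1) :
    (1 - a₁ * s) * (b₂ - a₂ * s) < (1 - a₂ * s) * (b₁ - a₁ * s) := by
  have h1 : (0:ℝ) < 1 - a₁ := by linarith
  have h2 : (0:ℝ) < 1 - a₂ := by linarith
  set F0 : ℝ := b₁ - b₂ with hF0
  set F1 : ℝ := (1 - a₂) * (b₁ - a₁) - (1 - a₁) * (b₂ - a₂) with hF1
  have e0 : F0 * ((1 - a₁) * (1 - a₂)) = (a₂ - a₁) * (1 - c) := by
    linear_combination (1 - a₂) * hrel1 - (1 - a₁) * hrel2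
  have e1 : F1 * ((1 - a₁) * (1 - a₂)) = (1 - c) * ((1 - a₁)^2 - (1 - a₂)^2) := by
    linear_combination (1 - a₂)^2 * hrel1 - (1 - a₁)^2 * hrel2
  have hF0pos : 0 < F0 := by
    have := mul_pos h1 h2
    nlinarith [e0]
  have hF1pos : 0 < F1 := by
    have h3 : (0:ℝ) < (1 - c) * ((1 - a₁)^2 - (1 - a₂)^2) := by
      nlinarith [mul_pos (by linarith : (0:ℝ) < 1 - c)
        (mul_pos (by linarith : (0:ℝ) < a₂ - a₁) (by linarith : (0:ℝ) < 2 - a₁ - a₂))]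
    nlinarith [mul_pos h1 h2]
  have expand : (1 - a₂ * s) * (b₁ - a₁ * s) - (1 - a₁ * s) * (b₂ - a₂ * s)
      = (1 - s) * F0 + s * F1 := by rw [hF0, hF1]; ring
  nlinarith [mul_nonneg (by linarith : (0:ℝ) ≤ 1 - s) hF0pos.le, mul_nonneg hs0 hF1pos.le,
    mul_pos hF0pos hF1pos]

lemma CDJ_lt {c a₁ b₁ a₂ b₂ : ℝ} (hc : c < 1)
    (ha1 : 0 < a₁) (h12 : a₁ < a₂) (ha2 : a₂ < 1)
    (hab1 : a₁ < b₁) (hab2 : a₂ < b₂) (hb1 : b₁ < 1)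
    (hrel1 : b₁ * (1 - a₁) = c - a₁) (hrel2 : b₂ * (1 - a₂) = c - a₂) :
    CDJ a₁ b₁ < CDJ a₂ b₂ := by
  have hπ : (0:ℝ) < π/2 := by positivity
  have hpt : ∀ θ : ℝ, CDgg a₁ b₁ θ < CDgg a₂ b₂ θ := by
    intro θ
    set s := Real.sin θ ^ 2 with hs
    have hs0 : 0 ≤ s := sq_nonneg _
    have hs1 : s ≤ 1 := Real.sin_sq_le_one θ
    have key := CD_key_ineq c a₁ b₁ a₂ b₂ s hc ha1 h12 ha2 hab2 hb1 hrel1 hrel2 hs0 hs1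
    have hd1 : 0 < b₁ - a₁ * s := by nlinarith
    have hd2 : 0 < b₂ - a₂ * s := by nlinarith
    have hn1 : 0 ≤ 1 - a₁ * s := by nlinarith
    unfold CDgg
    apply Real.sqrt_lt_sqrt (by positivity)
    rw [div_lt_div_iff₀ hd1 hd2]
    simp only [← hs]
    nlinarith [key]
  have hint1 := (CDgg_continuous ha1 hab1).intervalIntegrable (μ := volume) 0 (π/2)
  have hint2 := (CDgg_continuous (lt_trans ha1 h12) hab2).intervalIntegrable (μ := volume) 0 (π/2)
  have hdiff : 0 < ∫ θ in (0:ℝ)..(π/2), (CDgg a₂ b₂ θ - CDgg a₁ b₁ θ) := by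
    apply intervalIntegral_pos_of_pos_on (hint2.sub hint1)
    · intro θ _; linarith [hpt θ]
    · exact hπ
  rw [intervalIntegral.integral_sub hint2 hint1] at hdiff
  unfold CDJ
  linarith

lemma CDJ_contAt {A B : ℝ → ℝ} (hA : Continuous A) (hB : Continuous B) {ℏ₀ : ℝ}
    (hA0 : 0 < A ℏ₀) (hgap : A ℏ₀ < B ℏ₀) :
    ContinuousAt (fun ℏ => CDJ (A ℏ) (B ℏ)) ℏ₀ := by
  set δ := B ℏ₀ - A ℏ₀ with hδ
  have hδpos : 0 < δ := by simp [hδ]; linarith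
  set G : ℝ → ℝ → ℝ := fun ℏ θ =>
    Real.sqrt ((1 - A ℏ * Real.sin θ ^ 2) / max (B ℏ - A ℏ * Real.sin θ ^ 2) (δ/2)) with hG
  have hGcont : Continuous (Function.uncurry G) := by
    apply Real.continuous_sqrt.comp
    apply Continuous.div
    · fun_prop
    · fun_prop
    · intro p
      have : δ/2 ≤ max (B p.1 - A p.1 * Real.sin p.2 ^ 2) (δ/2) := le_max_right _ _
      positivity
  have hIcont : Continuous (fun ℏ => ∫ θ in (0:ℝ)..(π/2), G ℏ θ) :=
    intervalIntegral.continuous_parametric_intervalIntegral_of_continuous' (μ := volume) hGcont 0 (π/2)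
  have hU : ∀ᶠ ℏ in nhds ℏ₀, (0 < A ℏ ∧ δ/2 < B ℏ - A ℏ) := by
    have h1 : ContinuousAt A ℏ₀ := hA.continuousAt
    have h2 : ContinuousAt (fun ℏ => B ℏ - A ℏ) ℏ₀ := (hB.sub hA).continuousAt
    have e1 : ∀ᶠ ℏ in nhds ℏ₀, 0 < A ℏ := h1.eventually (eventually_gt_nhds hA0)
    have e2 : ∀ᶠ ℏ in nhds ℏ₀, δ/2 < B ℏ - A ℏ :=
      h2.eventually (eventually_gt_nhds (by simp [hδ]; linarith))
    exact e1.and e2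
  have hEq : (fun ℏ => CDJ (A ℏ) (B ℏ)) =ᶠ[nhds ℏ₀] (fun ℏ => ∫ θ in (0:ℝ)..(π/2), G ℏ θ) := by
    filter_upwards [hU] with ℏ hℏ
    unfold CDJ CDgg
    apply intervalIntegral.integral_congr
    intro θ _
    have hs1 : Real.sin θ ^ 2 ≤ 1 := Real.sin_sq_le_one θ
    have hs0 : 0 ≤ Real.sin θ ^ 2 := sq_nonneg _
    have : B ℏ - A ℏ * Real.sin θ ^ 2 ≥ B ℏ - A ℏ := by nlinarith [hℏ.1]
    have hmax : max (B ℏ - A ℏ * Real.sin θ ^ 2) (δ/2) = B ℏ - A ℏ * Real.sin θ ^ 2 :=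
      max_eq_left (by linarith [hℏ.2])
    rw [hG]
    simp only [hmax]
  exact (hIcont.continuousAt).congr hEq.symm

set_option maxHeartbeats 2000000 in
lemma CD_cov (h a b : ℝ) (E : ℝ → ℝ) (hEm : Measurable E) (ha : 0 < a) (hab : a < b)
    (hb : b < 1)
    (hEx : ∀ x : ℝ, -1 < x → x < 1 →
      h - E x = (a - x ^ 2) * (b - x ^ 2) / (2 * (1 - x ^ 2))) :
    ∫ x in (0:ℝ)..Real.sqrt a, (Real.sqrt (h - E x))⁻¹ = Real.sqrt 2 * CDJ a b := by
  have ha1 : a < 1 := hab.trans hb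
  set sa := Real.sqrt a with hsa_def
  have hsa : 0 < sa := Real.sqrt_pos.mpr ha
  have hsq : sa ^ 2 = a := Real.sq_sqrt ha.le
  have hsa1 : sa < 1 := by
    nlinarith
  set g : ℝ → ℝ := fun x => (Real.sqrt (h - E x))⁻¹ with hg_def
  set f : ℝ → ℝ := fun θ => sa * Real.sin θ with hf_def
  have hπ : (0:ℝ) < π / 2 := by positivity
  -- positivity of h - E x on Ioo 0 sa
  have hpos : ∀ x ∈ Ioo (0:ℝ) sa, 0 < h - E x := by
    intro x hx
    have hx1 : x < 1 := hx.2.trans hsa1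
    have hxm1 : (-1:ℝ) < x := by linarith [hx.1]
    rw [hEx x hxm1 hx1]
    have hxa : x ^ 2 < a := by nlinarith [hx.1, hx.2]
    have hx2 : x ^ 2 < 1 := by nlinarith
    apply div_pos (mul_pos (by linarith) (by linarith)) (by linarith)
  -- continuity of g on Ioo 0 sa
  have hgcont : ContinuousOn g (Ioo (0:ℝ) sa) := by
    have hR : ContinuousOn (fun x : ℝ => (a - x ^ 2) * (b - x ^ 2) / (2 * (1 - x ^ 2)))
        (Ioo (-1:ℝ) 1) := by
      apply ContinuousOn.div (by fun_prop) (by fun_prop)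
      intro x hx
      have : x ^ 2 < 1 := by nlinarith [hx.1, hx.2]
      nlinarith
    have hsub : Ioo (0:ℝ) sa ⊆ Ioo (-1:ℝ) 1 := by
      intro x hx; exact ⟨by linarith [hx.1], hx.2.trans hsa1⟩
    have hHE : ContinuousOn (fun x => h - E x) (Ioo (0:ℝ) sa) :=
      (hR.mono hsub).congr (fun x hx => hEx x (hsub hx).1 (hsub hx).2)
    exact (hHE.sqrt).inv₀ fun x hx => (Real.sqrt_pos.mpr (hpos x hx)).ne'
  -- image facts
  have himIoo : f '' Ioo 0 (π/2) ⊆ Ioo (0:ℝ) sa := by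
    rintro _ ⟨θ, hθ, rfl⟩
    have hsinpos : 0 < Real.sin θ := Real.sin_pos_of_pos_of_lt_pi hθ.1 (by linarith [Real.pi_pos, hθ.2])
    have hcos : 0 < Real.cos θ :=
      Real.cos_pos_of_mem_Ioo ⟨by linarith [hθ.1, hπ], hθ.2⟩
    have hsin1 : Real.sin θ < 1 := by
      nlinarith [Real.sin_sq_add_cos_sq θ]
    refine ⟨by positivity, ?_⟩
    show sa * Real.sin θ < sa
    nlinarith
  have himIcc : f '' Icc 0 (π/2) ⊆ Icc (0:ℝ) sa := by
    rintro _ ⟨θ, hθ, rfl⟩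
    have hsin0 : 0 ≤ Real.sin θ :=
      Real.sin_nonneg_of_nonneg_of_le_pi hθ.1 (by linarith [Real.pi_pos, hθ.2])
    have hsin1 : Real.sin θ ≤ 1 := Real.sin_le_one θ
    refine ⟨by positivity, ?_⟩
    show sa * Real.sin θ ≤ sa
    nlinarith
  -- pointwise identity on Ico 0 (π/2)
  have hptwise : ∀ θ ∈ Ico (0:ℝ) (π/2),
      g (f θ) * (sa * Real.cos θ) = Real.sqrt 2 * CDgg a b θ := by
    intro θ hθ
    have hcos : 0 < Real.cos θ := Real.cos_pos_of_mem_Ioo ⟨by linarith [hθ.1, hπ], hθ.2⟩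
    have hsin0 : 0 ≤ Real.sin θ :=
      Real.sin_nonneg_of_nonneg_of_le_pi hθ.1 (by linarith [Real.pi_pos, hθ.2])
    have hsc := Real.sin_sq_add_cos_sq θ
    set s := Real.sin θ with hs_def
    set co := Real.cos θ with hco_def
    have hs1 : s < 1 := by nlinarith
    have hxm : (-1:ℝ) < sa * s := by nlinarith
    have hx1 : sa * s < 1 := by nlinarith
    have hE' := hEx (sa * s) hxm hx1
    have h1 : 0 < 1 - a * s ^ 2 := by nlinarith
    have h2 : 0 < b - a * s ^ 2 := by nlinarith
    have e0 : a * co ^ 2 * (b - a * s ^ 2) / (2 * (1 - a * s ^ 2))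
        = (sa * co) ^ 2 * ((b - a * s ^ 2) / (2 * (1 - a * s ^ 2))) := by
      rw [mul_pow, hsq]; ring
    have e1 : h - E (sa * s)
        = (sa * co) ^ 2 * ((b - a * s ^ 2) / (2 * (1 - a * s ^ 2))) := by
      rw [hE', ← e0]
      have : (sa * s) ^ 2 = a * s ^ 2 := by rw [mul_pow, hsq]
      rw [this]
      have : a - a * s ^ 2 = a * co ^ 2 := by nlinarith
      rw [this]
    show (Real.sqrt (h - E (sa * s)))⁻¹ * (sa * co) = Real.sqrt 2 * CDgg a b θ
    rw [e1, Real.sqrt_mul (by positivity), Real.sqrt_sq (by positivity), mul_inv]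
    set Q := Real.sqrt ((b - a * s ^ 2) / (2 * (1 - a * s ^ 2))) with hQ_def
    have hQpos : 0 < Q := Real.sqrt_pos.mpr (by positivity)
    have hsaco : (sa * co) ≠ 0 := by positivity
    have lhs_eq : (sa * co)⁻¹ * Q⁻¹ * (sa * co) = Q⁻¹ := by
      rw [mul_comm ((sa * co))⁻¹ Q⁻¹, mul_assoc, inv_mul_cancel₀ hsaco, mul_one]
    rw [lhs_eq]
    rw [hQ_def, ← Real.sqrt_inv]
    have e2 : ((b - a * s ^ 2) / (2 * (1 - a * s ^ 2)))⁻¹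
        = 2 * ((1 - a * s ^ 2) / (b - a * s ^ 2)) := by
      rw [inv_div, mul_div_assoc]
    rw [e2, Real.sqrt_mul (by norm_num)]
    rfl
  -- a.e. versions
  have hae_ne : ∀ᵐ θ : ℝ, θ ≠ π / 2 := by
    have h0 : (volume : Measure ℝ) {π/2} = 0 := measure_singleton _
    exact measure_eq_zero_iff_ae_notMem.mp h0
  -- integrability of the θ-side integrand
  have hNcont : Continuous (fun θ => Real.sqrt 2 * CDgg a b θ) :=
    continuous_const.mul (CDgg_continuous ha hab)
  have hg2 : IntegrableOn (fun θ => (g ∘ f) θ * (sa * Real.cos θ)) (Icc (0:ℝ) (π/2)) := by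
    apply (hNcont.integrableOn_Icc).congr
    rw [Filter.EventuallyEq, ae_restrict_iff' measurableSet_Icc]
    filter_upwards [hae_ne] with θ hne hmem
    exact (hptwise θ ⟨hmem.1, lt_of_le_of_ne hmem.2 hne⟩).symm
  -- integrability of g on Icc 0 sa
  have hCpos : 0 < sa * (b - a) / 2 := by
    have : 0 < b - a := by linarith
    positivity
  have hbound_int : IntegrableOn
      (fun x => (Real.sqrt (sa * (b - a) / 2))⁻¹ * (sa - x) ^ (-(1/2) : ℝ)) (Icc 0 sa) := by
    have h1 : IntervalIntegrable (fun x : ℝ => x ^ (-(1/2) : ℝ)) volume 0 sa :=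
      intervalIntegrable_rpow' (by norm_num)
    have h2 := (h1.comp_sub_left sa).symm
    simp only [sub_zero, sub_self] at h2
    rw [intervalIntegrable_iff_integrableOn_Icc_of_le hsa.le] at h2
    exact h2.const_mul _
  have hg1' : IntegrableOn g (Icc (0:ℝ) sa) := by
    apply Integrable.mono' hbound_int
    · exact (((measurable_const.sub hEm).sqrt).inv).aestronglyMeasurable
    · rw [ae_restrict_iff' measurableSet_Icc]
      filter_upwards with x hx
      rcases eq_or_lt_of_le hx.2 with heq | hlt
      · have hE' := hEx x (by linarith [hx.1]) (by rw [heq]; exact hsa1)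
        have hzero : h - E x = 0 := by
          rw [hE', heq, hsq]
          simp
        have hgx : g x = 0 := by
          show (Real.sqrt (h - E x))⁻¹ = 0
          rw [hzero, Real.sqrt_zero, inv_zero]
        rw [hgx, heq, sub_self, Real.zero_rpow (by norm_num), mul_zero, norm_zero]
      · have hx1 : x < 1 := hlt.trans hsa1
        have hE' := hEx x (by linarith [hx.1]) hx1
        have hxa : x ^ 2 < a := by nlinarith [hx.1]
        have hx2 : x ^ 2 < 1 := by nlinarith
        set Q : ℝ := (sa - x) * (sa * (b - a) / 2) with hQdef
        have hQpos : 0 < Q := by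
          apply mul_pos (by linarith) hCpos
        have hQleP : Q ≤ h - E x := by
          rw [hE', le_div_iff₀ (by linarith)]
          have f1 : (sa - x) * sa ≤ a - x ^ 2 := by nlinarith [hx.1]
          have f2 : b - a ≤ b - x ^ 2 := by nlinarith
          nlinarith [mul_pos (sub_pos.mpr hlt) hCpos, mul_nonneg (sub_pos.mpr hlt).le hsa.le,
            mul_le_mul f1 f2 (by linarith) (by nlinarith [hx.1])]
        have hgx : ‖g x‖ = (Real.sqrt (h - E x))⁻¹ := by
          rw [hg_def]
          simp only [Real.norm_eq_abs]
          exact abs_of_nonneg (by positivity)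
        rw [hgx]
        have step1 : (Real.sqrt (h - E x))⁻¹ ≤ (Real.sqrt Q)⁻¹ := by
          apply inv_anti₀ (Real.sqrt_pos.mpr hQpos)
          exact Real.sqrt_le_sqrt hQleP
        apply step1.trans
        rw [hQdef, Real.sqrt_mul (by linarith), mul_inv]
        rw [Real.sqrt_eq_rpow, ← Real.rpow_neg (by linarith)]
        rw [mul_comm]
  have hg1 : IntegrableOn g (f '' uIcc (0:ℝ) (π/2)) := by
    apply hg1'.mono_set
    rw [uIcc_of_le hπ.le]
    exact himIcc
  -- change of variables
  have hmin : min (0:ℝ) (π/2) = 0 := min_eq_left hπ.le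
  have hmax : max (0:ℝ) (π/2) = π/2 := max_eq_right hπ.le
  have key := intervalIntegral.integral_comp_mul_deriv''' (a := (0:ℝ)) (b := π/2)
      (f := f) (f' := fun θ => sa * Real.cos θ) (g := g)
      ((continuous_const.mul continuous_sin).continuousOn)
      (by
        intro x hx
        exact ((Real.hasDerivAt_sin x).const_mul sa).hasDerivWithinAt)
      (by
        rw [hmin, hmax]
        exact hgcont.mono himIoo)
      hg1
      (by rw [uIcc_of_le hπ.le]; exact hg2)
  have hf0 : f 0 = 0 := by simp [hf_def]
  have hfπ : f (π/2) = sa := by simp [hf_def]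
  rw [hf0, hfπ] at key
  rw [← key]
  have congr1 : ∫ θ in (0:ℝ)..(π/2), (g ∘ f) θ * (sa * Real.cos θ)
      = ∫ θ in (0:ℝ)..(π/2), Real.sqrt 2 * CDgg a b θ := by
    apply intervalIntegral.integral_congr_ae
    filter_upwards [hae_ne] with θ hne hmem
    rw [uIoc_of_le hπ.le] at hmem
    exact hptwise θ ⟨hmem.1.le, lt_of_le_of_ne hmem.2 hne⟩
  rw [congr1, CDJ, intervalIntegral.integral_const_mul]

theorem combDrive_period_surjective (β V₀ : ℝ) (hβ : 0 < β) (hV0 : 0 < V₀)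
    (hV1 : V₀ < 1 / (2 * Real.sqrt β))
    (xstar : ℝ) (hxstar : xstar = Real.sqrt (1 - 2 * Real.sqrt β * V₀))
    (E : ℝ → ℝ)
    (hE : ∀ x, E x = x ^ 2 / 2 - 2 * β * V₀ ^ 2 / (1 - x ^ 2) + 2 * β * V₀ ^ 2)
    (hstar : ℝ) (hhstar : hstar = E xstar)
    (xp : ℝ → ℝ)
    (hxp : ∀ ℏ ∈ Set.Ioo (0 : ℝ) hstar, xp ℏ ∈ Set.Ioo 0 xstar ∧ E (xp ℏ) = ℏ)
    (T : ℝ → ℝ)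
    (hT : ∀ ℏ ∈ Set.Ioo (0 : ℝ) hstar,
      T ℏ = 2 * Real.sqrt 2 * ∫ x in (0 : ℝ)..(xp ℏ), (Real.sqrt (ℏ - E x))⁻¹) :
    ∀ τ : ℝ, τ > 2 * Real.pi / Real.sqrt (1 - 4 * β * V₀ ^ 2) →
      ∃! ℏ : ℝ, ℏ ∈ Set.Ioo (0 : ℝ) hstar ∧ T ℏ = τ := by
  intro τ hτ
  have hsb : 0 < Real.sqrt β := Real.sqrt_pos.mpr hβ
  have hsbsq : Real.sqrt β ^ 2 = β := Real.sq_sqrt hβ.le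
  have hsbV : 2 * Real.sqrt β * V₀ < 1 := by
    rw [lt_div_iff₀ (by positivity)] at hV1
    nlinarith
  set m : ℝ := 1 - 2 * Real.sqrt β * V₀ with hm
  have hm0 : 0 < m := by rw [hm]; linarith
  have hm1 : m < 1 := by rw [hm]; nlinarith
  have hxsq : xstar ^ 2 = m := by rw [hxstar]; exact Real.sq_sqrt hm0.le
  have hxpos : 0 < xstar := by rw [hxstar]; exact Real.sqrt_pos.mpr hm0
  set c : ℝ := 1 - 4 * β * V₀ ^ 2 with hc
  have hcm : c = m * (2 - m) := by rw [hc, hm]; nlinarith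
  have hc0 : 0 < c := by rw [hcm]; nlinarith
  have hc1 : c < 1 := by rw [hcm]; nlinarith
  have hhs : hstar = m ^ 2 / 2 := by
    rw [hhstar, hE xstar, hxsq]
    have h2 : 2 * β * V₀ ^ 2 = (1 - m) ^ 2 / 2 := by rw [hm]; nlinarith
    have h1m : (1:ℝ) - m ≠ 0 := by linarith
    rw [h2]
    field_simp
    ring
  have hhspos : 0 < hstar := by rw [hhs]; positivity
  have hEmeas : Measurable E := by
    have hEfun : E = fun x => x ^ 2 / 2 - 2 * β * V₀ ^ 2 / (1 - x ^ 2) + 2 * β * V₀ ^ 2 :=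
      funext hE
    rw [hEfun]
    apply Measurable.add
    · apply Measurable.sub
      · fun_prop
      · exact (measurable_const.div (by fun_prop))
    · exact measurable_const
  set A : ℝ → ℝ := fun ℏ => CDA c ℏ with hA
  set B : ℝ → ℝ := fun ℏ => CDB c ℏ with hB
  have hroots : ∀ ℏ ∈ Set.Ioo (0:ℝ) hstar, 0 < A ℏ ∧ A ℏ < m ∧ m < B ℏ ∧ B ℏ < 1 ∧
      A ℏ + B ℏ = c + 2*ℏ ∧ A ℏ * B ℏ = 2*ℏ := by
    intro ℏ hℏ
    exact CD_roots c m ℏ hm0 hm1 hcm hℏ.1 (by rw [← hhs]; exact hℏ.2)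
  have hEform : ∀ ℏ ∈ Set.Ioo (0:ℝ) hstar, ∀ x : ℝ, -1 < x → x < 1 →
      ℏ - E x = (A ℏ - x ^ 2) * (B ℏ - x ^ 2) / (2 * (1 - x ^ 2)) := by
    intro ℏ hℏ x hx1 hx2
    obtain ⟨_, _, _, _, hsum, hprod⟩ := hroots ℏ hℏ
    have hnum : (A ℏ - x ^ 2) * (B ℏ - x ^ 2) = x ^ 4 - (c + 2*ℏ) * x ^ 2 + 2*ℏ := by
      linear_combination (-(x ^ 2)) * hsum + hprod
    rw [hE x, hnum]
    have h1x : 1 - x ^ 2 ≠ 0 := by nlinarith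
    rw [hc]
    field_simp
    ring
  have hABlt : ∀ ℏ ∈ Set.Ioo (0:ℝ) hstar, A ℏ < B ℏ := fun ℏ hℏ =>
    lt_trans (hroots ℏ hℏ).2.1 (hroots ℏ hℏ).2.2.1
  -- T = 4 CDJ
  have hTval : ∀ ℏ ∈ Set.Ioo (0:ℝ) hstar, T ℏ = 4 * CDJ (A ℏ) (B ℏ) := by
    intro ℏ hℏ
    obtain ⟨hxpIoo, hxpE⟩ := hxp ℏ hℏ
    obtain ⟨hA0, hAm, hmB, hB1, hsum, hprod⟩ := hroots ℏ hℏ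
    have hxstar1 : xstar < 1 := by nlinarith [hxsq, hxpos]
    have hxplt1 : xp ℏ < 1 := lt_trans hxpIoo.2 hxstar1
    have hxpm : xp ℏ ^ 2 < m := by nlinarith [hxpIoo.1, hxpIoo.2, hxsq, hxpos]
    have hxpsq : xp ℏ ^ 2 = A ℏ := by
      have hform := hEform ℏ hℏ (xp ℏ) (by linarith [hxpIoo.1]) hxplt1
      rw [hxpE, sub_self] at hform
      have h1x : 0 < 1 - xp ℏ ^ 2 := by nlinarith
      field_simp at hform
      have hform : A ℏ - xp ℏ ^ 2 = 0 ∨ B ℏ - xp ℏ ^ 2 = 0 := mul_eq_zero.mp (by linarith [hform])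
      rcases hform with h | h
      · linarith
      · exfalso; nlinarith
    have hxpe : xp ℏ = Real.sqrt (A ℏ) := by
      rw [← hxpsq, Real.sqrt_sq hxpIoo.1.le]
    rw [hT ℏ hℏ, hxpe,
      CD_cov ℏ (A ℏ) (B ℏ) E hEmeas hA0 (lt_trans hAm hmB) hB1 (hEform ℏ hℏ)]
    have h22 : Real.sqrt 2 * Real.sqrt 2 = 2 := Real.mul_self_sqrt (by norm_num)
    linear_combination (2 * CDJ (A ℏ) (B ℏ)) * h22
  -- relation B(1-A) = c - A
  have hrel : ∀ ℏ ∈ Set.Ioo (0:ℝ) hstar, B ℏ * (1 - A ℏ) = c - A ℏ := by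
    intro ℏ hℏ
    obtain ⟨_, _, _, _, hsum, hprod⟩ := hroots ℏ hℏ
    linear_combination hsum - hprod
  -- strict monotonicity of T on Ioo
  have hTmono : ∀ ℏ₁ ∈ Set.Ioo (0:ℝ) hstar, ∀ ℏ₂ ∈ Set.Ioo (0:ℝ) hstar,
      ℏ₁ < ℏ₂ → T ℏ₁ < T ℏ₂ := by
    intro ℏ₁ h1 ℏ₂ h2 hlt
    obtain ⟨hA10, hA1m, hmB1, hB11, hsum1, hprod1⟩ := hroots ℏ₁ h1
    obtain ⟨hA20, hA2m, hmB2, hB21, hsum2, hprod2⟩ := hroots ℏ₂ h2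
    have hA12 : A ℏ₁ < A ℏ₂ := by
      have e : (A ℏ₁ - A ℏ₂) * (A ℏ₁ - B ℏ₂) = 2 * (ℏ₂ - ℏ₁) * (1 - A ℏ₁) := by
        linear_combination (-(A ℏ₁)) * hsum2 + hprod2 + (A ℏ₁) * hsum1 - hprod1
      have hfac : 0 < 2 * (ℏ₂ - ℏ₁) * (1 - A ℏ₁) := by
        have : A ℏ₁ < 1 := lt_trans hA1m hm1
        nlinarith
      nlinarith [hfac, e]
    have hJ := CDJ_lt hc1 hA10 hA12 (lt_trans hA2m hm1)
      (lt_trans hA1m hmB1) (lt_trans hA2m hmB2) hB11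
      (hrel ℏ₁ h1) (hrel ℏ₂ h2)
    rw [hTval ℏ₁ h1, hTval ℏ₂ h2]
    linarith
  -- continuity of T on Ioo
  have hAcont : Continuous A := by
    rw [hA]
    unfold CDA
    apply Continuous.div_const
    exact (by fun_prop : Continuous fun ℏ : ℝ => c + 2*ℏ).sub
      (Real.continuous_sqrt.comp (by fun_prop))
  have hBcont : Continuous B := by
    rw [hB]
    unfold CDB
    apply Continuous.div_const
    exact (by fun_prop : Continuous fun ℏ : ℝ => c + 2*ℏ).add
      (Real.continuous_sqrt.comp (by fun_prop))
  have hTcont : ∀ ℏ ∈ Set.Ioo (0:ℝ) hstar, ContinuousAt T ℏ := by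
    intro ℏ hℏ
    obtain ⟨hA0, hAm, hmB, hB1, _, _⟩ := hroots ℏ hℏ
    have h4 : ContinuousAt (fun x => 4 * CDJ (A x) (B x)) ℏ :=
      continuousAt_const.mul (CDJ_contAt hAcont hBcont hA0 (lt_trans hAm hmB))
    apply h4.congr
    filter_upwards [isOpen_Ioo.mem_nhds hℏ] with x hx
    exact (hTval x hx).symm
  -- the zero-limit bound : value of B - A
  have hBA : ∀ ℏ, B ℏ - A ℏ = Real.sqrt ((c + 2*ℏ)^2 - 8*ℏ) := by
    intro ℏ; rw [hA, hB]; unfold CDA CDB; ring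
  -- choose ℏ₁ with T ℏ₁ < τ
  have hτpos : 2 * π / Real.sqrt c > 0 := by positivity
  obtain ⟨ℏ₁, hℏ₁Ioo, hTℏ₁⟩ : ∃ ℏ₁ ∈ Set.Ioo (0:ℝ) hstar, T ℏ₁ < τ := by
    have hΦcont : ContinuousAt
        (fun ℏ : ℝ => 2 * π * Real.sqrt (1 / Real.sqrt ((c + 2*ℏ)^2 - 8*ℏ))) 0 := by
      apply ContinuousAt.mul continuousAt_const
      apply Real.continuous_sqrt.continuousAt.comp
      apply ContinuousAt.div continuousAt_const
      · exact (Real.continuous_sqrt.comp (by fun_prop)).continuousAt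
      · show Real.sqrt ((c + 2*(0:ℝ))^2 - 8*0) ≠ 0
        rw [show (c + 2*(0:ℝ))^2 - 8*0 = c^2 by ring, Real.sqrt_sq hc0.le]
        exact hc0.ne'
    have hev : ∀ᶠ ℏ in nhds 0,
        2 * π * Real.sqrt (1 / Real.sqrt ((c + 2*ℏ)^2 - 8*ℏ)) < τ := by
      apply hΦcont.eventually_lt continuousAt_const
      show 2 * π * Real.sqrt (1 / Real.sqrt ((c + 2*(0:ℝ))^2 - 8*0)) < τ
      rw [show (c + 2*(0:ℝ))^2 - 8*0 = c^2 by ring, Real.sqrt_sq hc0.le, one_div,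
        Real.sqrt_inv]
      calc 2 * π * (Real.sqrt c)⁻¹ = 2 * π / Real.sqrt c := by ring
        _ < τ := hτ
    rw [Metric.eventually_nhds_iff] at hev
    obtain ⟨δ, hδpos, hδ⟩ := hev
    set ℏ₁ := min (δ/2) (hstar/2) with hℏ₁
    have hℏ₁pos : 0 < ℏ₁ := by apply lt_min (by linarith) (by linarith)
    have hℏ₁lt : ℏ₁ < hstar := lt_of_le_of_lt (min_le_right _ _) (by linarith)
    have hmem : ℏ₁ ∈ Set.Ioo (0:ℝ) hstar := ⟨hℏ₁pos, hℏ₁lt⟩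
    refine ⟨ℏ₁, hmem, ?_⟩
    have hΦlt : 2 * π * Real.sqrt (1 / Real.sqrt ((c + 2*ℏ₁)^2 - 8*ℏ₁)) < τ := by
      apply hδ
      simp only [dist_zero_right, Real.norm_eq_abs, abs_of_pos hℏ₁pos]
      exact lt_of_le_of_lt (min_le_left _ _) (by linarith)
    obtain ⟨hA0, hAm, hmB, hB1, _, _⟩ := hroots ℏ₁ hmem
    have hle := CDJ_le hA0 (lt_trans hAm hmB)
    have hTle : T ℏ₁ ≤ 2 * π * Real.sqrt (1 / Real.sqrt ((c + 2*ℏ₁)^2 - 8*ℏ₁)) := by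
      rw [hTval ℏ₁ hmem, ← hBA ℏ₁]
      linarith [hle]
    linarith
  -- choose ℏ₂ with τ < T ℏ₂
  obtain ⟨ℏ₂, hℏ₂Ioo, hTℏ₂⟩ : ∃ ℏ₂ ∈ Set.Ioo (0:ℝ) hstar, τ < T ℏ₂ := by
    have hsm : 0 < Real.sqrt (1 - m) := Real.sqrt_pos.mpr (by linarith)
    set K : ℝ := Real.log (π/2) - (τ/4 + 1) / Real.sqrt (1 - m) with hK
    set εf : ℝ → ℝ := fun ℏ => Real.sqrt (Real.sqrt ((c + 2*ℏ)^2 - 8*ℏ)) with hεf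
    have hεcont : ContinuousAt εf hstar :=
      (Real.continuous_sqrt.comp (Real.continuous_sqrt.comp (by fun_prop))).continuousAt
    have hεf0 : εf hstar = 0 := by
      rw [hεf]
      simp only
      have : (c + 2*hstar)^2 - 8*hstar = 0 := by rw [hcm, hhs]; ring
      rw [this]
      simp
    have hev : ∀ᶠ ℏ in nhds hstar, εf ℏ < Real.exp K := by
      apply hεcont.eventually_lt continuousAt_const
      rw [hεf0]; positivity
    rw [Metric.eventually_nhds_iff] at hev
    obtain ⟨δ, hδpos, hδ⟩ := hev
    set ℏ₂ := hstar - min (δ/2) (hstar/2) with hℏ₂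
    have hmem : ℏ₂ ∈ Set.Ioo (0:ℝ) hstar := by
      constructor
      · have : min (δ/2) (hstar/2) ≤ hstar/2 := min_le_right _ _
        simp only [hℏ₂]; linarith
      · have : 0 < min (δ/2) (hstar/2) := lt_min (by linarith) (by linarith)
        simp only [hℏ₂]; linarith
    refine ⟨ℏ₂, hmem, ?_⟩
    obtain ⟨hA0, hAm, hmB, hB1, _, _⟩ := hroots ℏ₂ hmem
    have hεlt : εf ℏ₂ < Real.exp K := by
      apply hδ
      have h1 : 0 < min (δ/2) (hstar/2) := lt_min (by linarith) (by linarith)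
      have h2 : min (δ/2) (hstar/2) ≤ δ/2 := min_le_left _ _
      simp only [hℏ₂, Real.dist_eq, sub_sub_cancel_left, abs_neg, abs_of_pos h1]
      linarith
    have hεval : εf ℏ₂ = Real.sqrt (B ℏ₂ - A ℏ₂) := by rw [hεf, hBA ℏ₂]
    have hBApos : 0 < B ℏ₂ - A ℏ₂ := by linarith [lt_trans hAm hmB]
    have hεpos : 0 < εf ℏ₂ := by rw [hεval]; exact Real.sqrt_pos.mpr hBApos
    have hlogε : Real.log (εf ℏ₂) < K := by
      have := Real.log_lt_log hεpos hεlt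
      rwa [Real.log_exp] at this
    have hge := CDJ_ge hA0 hAm hm1 (lt_trans hAm hmB) hB1
    rw [← hεval] at hge
    have hlog2 : Real.log (π/2) ≤ Real.log (εf ℏ₂ + π/2) := by
      apply Real.log_le_log (by positivity)
      linarith
    clear_value K εf
    have hstep : τ/4 + 1 ≤ Real.sqrt (1 - m) * (Real.log (εf ℏ₂ + π/2) - Real.log (εf ℏ₂)) := by
      have h1 : (τ/4 + 1) / Real.sqrt (1 - m) ≤ Real.log (εf ℏ₂ + π/2) - Real.log (εf ℏ₂) := by
        have : (τ/4 + 1) / Real.sqrt (1 - m) = Real.log (π/2) - K := by rw [hK]; ring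
        rw [this]
        linarith
      calc τ/4 + 1 = Real.sqrt (1 - m) * ((τ/4 + 1) / Real.sqrt (1 - m)) := by
            field_simp
        _ ≤ Real.sqrt (1 - m) * (Real.log (εf ℏ₂ + π/2) - Real.log (εf ℏ₂)) := by
            apply mul_le_mul_of_nonneg_left h1 hsm.le
    rw [hTval ℏ₂ hmem]
    nlinarith [hge, hstep]
  -- IVT
  have hℏ12 : ℏ₁ < ℏ₂ := by
    by_contra hcon
    push_neg at hcon
    rcases eq_or_lt_of_le hcon with heq | hlt'
    · rw [heq] at hTℏ₂; linarith
    · have := hTmono ℏ₂ hℏ₂Ioo ℏ₁ hℏ₁Ioo hlt'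
      linarith
  have hIccsub : Set.Icc ℏ₁ ℏ₂ ⊆ Set.Ioo (0:ℝ) hstar := by
    intro x hx
    exact ⟨lt_of_lt_of_le hℏ₁Ioo.1 hx.1, lt_of_le_of_lt hx.2 hℏ₂Ioo.2⟩
  have hTconOn : ContinuousOn T (Set.Icc ℏ₁ ℏ₂) := fun x hx =>
    (hTcont x (hIccsub hx)).continuousWithinAt
  have hIVT := intermediate_value_Icc hℏ12.le hTconOn
  have hτmem : τ ∈ Set.Icc (T ℏ₁) (T ℏ₂) := ⟨hTℏ₁.le, hTℏ₂.le⟩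
  obtain ⟨ℏ0, hℏ0Icc, hTℏ0⟩ := hIVT hτmem
  refine ⟨ℏ0, ⟨hIccsub hℏ0Icc, hTℏ0⟩, ?_⟩
  rintro ℏ' ⟨hℏ'Ioo, hTℏ'⟩
  rcases lt_trichotomy ℏ' ℏ0 with hlt | heq | hgt
  · have := hTmono ℏ' hℏ'Ioo ℏ0 (hIccsub hℏ0Icc) hlt
    rw [hTℏ', hTℏ0] at this
    linarith
  · exact heq
  · have := hTmono ℏ0 (hIccsub hℏ0Icc) ℏ' hℏ'Ioo hgt
    rw [hTℏ', hTℏ0] at this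
    linarith
end

section
/- Let β > 0, V₀ > 0, and H be real numbers. Let φ : ℝ → ℝ be twice differentiable with |φ(t)| < 1 for all t, satisfying the equation φ''(t) = −φ(t)·(1 − 4βV₀²/(1 − φ(t)²)²) and the energy relation (1/2)·φ'(t)² + φ(t)²/2 − 2βV₀²/(1 − φ(t)²) + 2βV₀² = H for all t. Set Y(t) = 1 − φ(t)² and G(t) = 4βV₀/Y(t). Then for all t, G''(t) = 8βV₀·Y(t)⁻⁴·(−2Y(t)³ + (12βV₀² + 6 − 6H)Y(t)² + (8H − 4 − 32βV₀²)Y(t) + 20βV₀²). -/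
set_option maxHeartbeats 1000000


/-- formula for the second derivative of G(t) = 4βV₀/(1 − φ(t)²). -/
theorem combDrive_G_second_derivative (β V₀ H : ℝ) (φ : ℝ → ℝ)
    (hφ1 : ∀ t, HasDerivAt φ (deriv φ t) t)
    (hφ2 : ∀ t, HasDerivAt (deriv φ) (deriv (deriv φ) t) t)
    (hbound : ∀ t, |φ t| < 1)
    (heq : ∀ t, deriv (deriv φ) t = -φ t * (1 - 4 * β * V₀ ^ 2 / (1 - φ t ^ 2) ^ 2))
    (henergy : ∀ t, (1 / 2) * (deriv φ t) ^ 2 + φ t ^ 2 / 2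
      - 2 * β * V₀ ^ 2 / (1 - φ t ^ 2) + 2 * β * V₀ ^ 2 = H)
    (Y G : ℝ → ℝ)
    (hY : ∀ t, Y t = 1 - φ t ^ 2)
    (hG : ∀ t, G t = 4 * β * V₀ / Y t) :
    ∀ t, deriv (deriv G) t = 8 * β * V₀ * (Y t) ^ (-4 : ℤ) *
      (-2 * Y t ^ 3 + (12 * β * V₀ ^ 2 + 6 - 6 * H) * Y t ^ 2
        + (8 * H - 4 - 32 * β * V₀ ^ 2) * Y t + 20 * β * V₀ ^ 2) := by
  have hne : ∀ t, 1 - φ t ^ 2 ≠ 0 := by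
    intro t
    have h := hbound t
    have : φ t ^ 2 < 1 := by
      have := abs_lt.mp h
      nlinarith
    nlinarith
  have hGfun : G = fun t => 4 * β * V₀ / (1 - φ t ^ 2) := by
    funext t; rw [hG t, hY t]
  -- first derivative
  have hD1 : ∀ t, HasDerivAt G
      (4 * β * V₀ * (2 * φ t * deriv φ t) / (1 - φ t ^ 2) ^ 2) t := by
    intro t
    rw [hGfun]
    have hu : HasDerivAt (fun s => 1 - φ s ^ 2) (-(2 * φ t * deriv φ t)) t := by
      simpa using ((hφ1 t).pow 2).const_sub 1
    have := (hasDerivAt_const t (4 * β * V₀)).div hu (hne t)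
    exact this.congr_deriv (by ring)
  have hderivG : deriv G = fun t =>
      4 * β * V₀ * (2 * φ t * deriv φ t) / (1 - φ t ^ 2) ^ 2 := by
    funext t; exact (hD1 t).deriv
  intro t
  set p := φ t with hp
  set v := deriv φ t with hv
  set a := deriv (deriv φ) t with ha
  -- second derivative
  have hnum : HasDerivAt (fun s => 4 * β * V₀ * (2 * φ s * deriv φ s))
      (4 * β * V₀ * (2 * v * v + 2 * p * a)) t := by
    have h1 : HasDerivAt (fun s => 2 * φ s) (2 * v) t := (hφ1 t).const_mul 2
    have h2 := h1.mul (hφ2 t)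
    have := h2.const_mul (4 * β * V₀)
    exact this
  have hden : HasDerivAt (fun s => (1 - φ s ^ 2) ^ 2)
      (2 * (1 - p ^ 2) * (-(2 * p * v))) t := by
    have hu : HasDerivAt (fun s => 1 - φ s ^ 2) (-(2 * p * v)) t := by
      simpa using ((hφ1 t).pow 2).const_sub 1
    have := hu.pow 2
    exact this.congr_deriv (by rw [← hp]; norm_num)
  have hden_ne : (1 - p ^ 2) ^ 2 ≠ 0 := pow_ne_zero 2 (hne t)
  have hD2 : HasDerivAt (deriv G)
      ((4 * β * V₀ * (2 * v * v + 2 * p * a) * (1 - p ^ 2) ^ 2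
        - 4 * β * V₀ * (2 * p * v) * (2 * (1 - p ^ 2) * (-(2 * p * v))))
        / ((1 - p ^ 2) ^ 2) ^ 2) t := by
    rw [hderivG]
    exact hnum.div hden hden_ne
  have hkey := hD2.deriv
  rw [hkey, hY t]
  have h1 : (1 - p ^ 2) ≠ 0 := hne t
  have hv2 : v ^ 2 = ((2 * H - p ^ 2 - 4 * β * V₀ ^ 2) * (1 - p ^ 2)
      + 4 * β * V₀ ^ 2) / (1 - p ^ 2) := by
    rw [eq_div_iff h1]
    have hE := henergy t
    rw [← hp, ← hv] at hE
    field_simp at hE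
    linear_combination hE
  have haeq : a = -p * (1 - 4 * β * V₀ ^ 2 / (1 - p ^ 2) ^ 2) := heq t
  rw [haeq]
  have hz : ((1 : ℝ) - p ^ 2) ^ (-4 : ℤ) = ((1 - p ^ 2) ^ 4)⁻¹ := by
    rw [zpow_neg]; norm_cast
  rw [hz]
  have hv2m : v ^ 2 * (1 - p ^ 2) = (2 * H - p ^ 2 - 4 * β * V₀ ^ 2) * (1 - p ^ 2)
      + 4 * β * V₀ ^ 2 := by
    rw [hv2]; field_simp
  field_simp
  linear_combination (8 * β * V₀ * (1 - p ^ 2) + 32 * β * V₀ * p ^ 2) * hv2m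
end

section
/- Let T_v > 0 and ω₀ = 2π/T_v. Let G : ℝ → ℝ be continuous on [0, T_v/2] and strictly monotonically increasing on [0, T_v/2]. Then ∫₀^{T_v/2} G(t)·cos(ω₀ t) dt < 0. -/
/-- if G is continuous and strictly increasing on [0, T_v/2], then
∫₀^{T_v/2} G(t) cos(ω₀ t) dt < 0, where ω₀ = 2π/T_v. -/
theorem combDrive_A1_neg (Tv ω₀ : ℝ) (hTv : 0 < Tv) (hω : ω₀ = 2 * Real.pi / Tv)
    (G : ℝ → ℝ)
    (hcont : ContinuousOn G (Set.Icc 0 (Tv / 2)))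
    (hmono : StrictMonoOn G (Set.Icc 0 (Tv / 2))) :
    (∫ t in (0 : ℝ)..(Tv / 2), G t * Real.cos (ω₀ * t)) < 0 := by
  have hπ := Real.pi_pos
  set a := Tv / 4 with ha
  set b := Tv / 2 with hb
  have h0a : (0 : ℝ) < a := by rw [ha]; positivity
  have hab' : a < b := by rw [ha, hb]; linarith
  have hba : b - a = a := by rw [ha, hb]; ring
  have hωpos : 0 < ω₀ := by rw [hω]; positivity
  have hωb : ω₀ * b = Real.pi := by
    rw [hω, hb]; field_simp
  have hωa : ω₀ * a = Real.pi / 2 := by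
    rw [hω, ha]; field_simp; ring
  have hcont' : ContinuousOn (fun t => G t * Real.cos (ω₀ * t)) (Set.Icc 0 b) :=
    hcont.mul ((Real.continuous_cos.comp (continuous_const.mul continuous_id)).continuousOn)
  -- integrability pieces
  have hI0a : IntervalIntegrable (fun t => G t * Real.cos (ω₀ * t)) MeasureTheory.volume 0 a := by
    apply ContinuousOn.intervalIntegrable
    apply hcont'.mono
    rw [Set.uIcc_of_le h0a.le]
    exact Set.Icc_subset_Icc le_rfl hab'.le
  have hIab : IntervalIntegrable (fun t => G t * Real.cos (ω₀ * t)) MeasureTheory.volume a b := by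
    apply ContinuousOn.intervalIntegrable
    apply hcont'.mono
    rw [Set.uIcc_of_le hab'.le]
    exact Set.Icc_subset_Icc h0a.le le_rfl
  have hmap : Set.MapsTo (fun t : ℝ => b - t) (Set.Icc 0 a) (Set.Icc 0 b) := by
    intro t ht
    simp only [Set.mem_Icc] at ht ⊢
    constructor <;> linarith [ht.1, ht.2]
  have hcontG2 : ContinuousOn (fun t => G (b - t)) (Set.Icc 0 a) :=
    hcont.comp ((continuous_const.sub continuous_id).continuousOn) hmap
  have hI2 : IntervalIntegrable (fun t => (G (b - t) - G t) * Real.cos (ω₀ * t))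
      MeasureTheory.volume 0 a := by
    apply ContinuousOn.intervalIntegrable
    rw [Set.uIcc_of_le h0a.le]
    apply ContinuousOn.mul
    · exact hcontG2.sub (hcont.mono (Set.Icc_subset_Icc le_rfl hab'.le))
    · exact (Real.continuous_cos.comp (continuous_const.mul continuous_id)).continuousOn
  -- change of variables for the second half
  have hsub : ∫ t in (0:ℝ)..a, G (b - t) * Real.cos (ω₀ * (b - t))
      = ∫ t in a..b, G t * Real.cos (ω₀ * t) := by
    rw [intervalIntegral.integral_comp_sub_left (fun t => G t * Real.cos (ω₀ * t)) b,
      sub_zero, hba]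
  have hcosneg : ∀ t : ℝ, Real.cos (ω₀ * (b - t)) = - Real.cos (ω₀ * t) := by
    intro t
    rw [mul_sub, hωb, Real.cos_pi_sub]
  have hsplit : (∫ t in (0:ℝ)..b, G t * Real.cos (ω₀ * t))
      = (∫ t in (0:ℝ)..a, G t * Real.cos (ω₀ * t))
        + ∫ t in a..b, G t * Real.cos (ω₀ * t) :=
    (intervalIntegral.integral_add_adjacent_intervals hI0a hIab).symm
  have hsecond : (∫ t in a..b, G t * Real.cos (ω₀ * t))
      = - ∫ t in (0:ℝ)..a, G (b - t) * Real.cos (ω₀ * t) := by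
    rw [← hsub]
    rw [← intervalIntegral.integral_neg]
    congr 1
    ext t
    rw [hcosneg t]
    ring
  have hI2' : IntervalIntegrable (fun t => G (b - t) * Real.cos (ω₀ * t))
      MeasureTheory.volume 0 a := by
    apply ContinuousOn.intervalIntegrable
    rw [Set.uIcc_of_le h0a.le]
    exact hcontG2.mul ((Real.continuous_cos.comp (continuous_const.mul continuous_id)).continuousOn)
  have key : (∫ t in (0:ℝ)..b, G t * Real.cos (ω₀ * t))
      = - ∫ t in (0:ℝ)..a, (G (b - t) - G t) * Real.cos (ω₀ * t) := by
    rw [hsplit, hsecond]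
    rw [show (fun t => (G (b - t) - G t) * Real.cos (ω₀ * t))
        = (fun t => G (b - t) * Real.cos (ω₀ * t) - G t * Real.cos (ω₀ * t)) by
      ext t; ring]
    rw [intervalIntegral.integral_sub hI2' hI0a]
    ring
  rw [key, neg_lt, neg_zero]
  apply intervalIntegral.intervalIntegral_pos_of_pos_on hI2 _ h0a
  intro t ht
  obtain ⟨ht0, hta⟩ := ht
  have htmem : t ∈ Set.Icc (0:ℝ) b := ⟨ht0.le, by linarith⟩
  have hbtmem : b - t ∈ Set.Icc (0:ℝ) b := ⟨by linarith, by linarith⟩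
  have hG : G t < G (b - t) := by
    apply hmono htmem hbtmem
    rw [ha, hb] at *
    linarith
  have hcospos : 0 < Real.cos (ω₀ * t) := by
    apply Real.cos_pos_of_mem_Ioo
    constructor
    · have : 0 < ω₀ * t := mul_pos hωpos ht0
      linarith
    · have : ω₀ * t < ω₀ * a := by
        exact mul_lt_mul_of_pos_left hta hωpos
      rw [hωa] at this
      exact this
  exact mul_pos (by linarith) hcospos
end

section
/- Let T_v > 0, ω₀ = 2π/T_v, and let n be an odd positive integer. Let G : ℝ → ℝ be continuous on [0, n·T_v/2], strictly monotonically increasing on [0, n·T_v/2], and convex on [0, n·T_v/2]. Then ∫₀^{n·T_v/2} G(t)·cos(ω₀ t) dt < 0. -/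
open intervalIntegral MeasureTheory

lemma aux_decomp (ω L : ℝ) (hL : 0 < L) (hωL : ω * L = Real.pi)
    (g : ℝ → ℝ) (hc : ContinuousOn g (Set.Icc 0 L)) :
    (∫ s in (0:ℝ)..L, g s * Real.cos (ω * s))
      = -∫ s in (0:ℝ)..(L/2), (g (L - s) - g s) * Real.cos (ω * s) := by
  have hf : ContinuousOn (fun s => g s * Real.cos (ω * s)) (Set.Icc 0 L) :=
    hc.mul (Real.continuous_cos.comp (continuous_const.mul continuous_id)).continuousOn
  have hsub1 : Set.Icc (0:ℝ) (L/2) ⊆ Set.Icc 0 L := Set.Icc_subset_Icc le_rfl (by linarith)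
  have hsub2 : Set.Icc (L/2) L ⊆ Set.Icc (0:ℝ) L := Set.Icc_subset_Icc (by linarith) le_rfl
  have hI1 : IntervalIntegrable (fun s => g s * Real.cos (ω * s)) volume 0 (L/2) :=
    (hf.mono hsub1).intervalIntegrable_of_Icc (by linarith)
  have hI2 : IntervalIntegrable (fun s => g s * Real.cos (ω * s)) volume (L/2) L :=
    (hf.mono hsub2).intervalIntegrable_of_Icc (by linarith)
  have hcomp : ContinuousOn (fun s => g (L - s) * Real.cos (ω * s)) (Set.Icc 0 (L/2)) := by
    apply ContinuousOn.mul
    · apply hc.comp (continuous_const.sub continuous_id).continuousOn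
      intro x hx
      simp only [Set.mem_Icc, id_eq, Pi.sub_apply] at hx ⊢
      constructor
      · linarith [hx.2]
      · linarith [hx.1]
    · exact (Real.continuous_cos.comp (continuous_const.mul continuous_id)).continuousOn
  have hI3 : IntervalIntegrable (fun s => g (L - s) * Real.cos (ω * s)) volume 0 (L/2) :=
    hcomp.intervalIntegrable_of_Icc (by linarith)
  have key : (∫ s in (L/2)..L, g s * Real.cos (ω * s))
      = -∫ s in (0:ℝ)..(L/2), g (L - s) * Real.cos (ω * s) := by
    have h := intervalIntegral.integral_comp_sub_left (a := (0:ℝ)) (b := L/2)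
      (fun s => g s * Real.cos (ω * s)) L
    rw [show L - L/2 = L/2 by ring, show L - 0 = L by ring] at h
    rw [← h, ← intervalIntegral.integral_neg]
    apply intervalIntegral.integral_congr
    intro s _
    have hcs : Real.cos (ω * (L - s)) = -Real.cos (ω * s) := by
      rw [show ω * (L - s) = Real.pi - ω * s by rw [← hωL]; ring, Real.cos_pi_sub]
    simp only [hcs]
    ring
  have split : (∫ s in (0:ℝ)..L, g s * Real.cos (ω * s))
      = (∫ s in (0:ℝ)..(L/2), g s * Real.cos (ω * s))
        + ∫ s in (L/2)..L, g s * Real.cos (ω * s) :=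
    (intervalIntegral.integral_add_adjacent_intervals hI1 hI2).symm
  have hdiff : (∫ s in (0:ℝ)..(L/2), (g (L - s) - g s) * Real.cos (ω * s))
      = (∫ s in (0:ℝ)..(L/2), g (L - s) * Real.cos (ω * s))
        - ∫ s in (0:ℝ)..(L/2), g s * Real.cos (ω * s) := by
    rw [← intervalIntegral.integral_sub hI3 hI1]
    apply intervalIntegral.integral_congr
    intro s _
    ring
  rw [split, key, hdiff]
  ring

lemma aux_cos_nonneg (ω L : ℝ) (hL : 0 < L) (hωL : ω * L = Real.pi)
    {s : ℝ} (h0 : 0 ≤ s) (h1 : s ≤ L/2) : 0 ≤ Real.cos (ω * s) := by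
  have hω : 0 < ω := by
    have := Real.pi_pos
    nlinarith
  apply Real.cos_nonneg_of_mem_Icc
  have hpi := Real.pi_pos
  have h2 : ω * s ≤ ω * (L/2) := by nlinarith
  have h3 : ω * (L/2) = Real.pi / 2 := by rw [← hωL]; ring
  constructor
  · nlinarith [mul_nonneg hω.le h0]
  · linarith

lemma aux_J_nonpos (ω L : ℝ) (hL : 0 < L) (hωL : ω * L = Real.pi)
    (g : ℝ → ℝ) (hc : ContinuousOn g (Set.Icc 0 L))
    (hm : MonotoneOn g (Set.Icc 0 L)) :
    (∫ s in (0:ℝ)..L, g s * Real.cos (ω * s)) ≤ 0 := by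
  rw [aux_decomp ω L hL hωL g hc]
  simp only [neg_nonpos]
  apply intervalIntegral.integral_nonneg (by linarith)
  intro u hu
  simp only [Set.mem_Icc] at hu
  apply mul_nonneg
  · have h1 : u ∈ Set.Icc (0:ℝ) L := ⟨hu.1, by linarith [hu.2]⟩
    have h2 : L - u ∈ Set.Icc (0:ℝ) L := ⟨by linarith [hu.2], by linarith [hu.1]⟩
    have := hm h1 h2 (by linarith [hu.2])
    linarith
  · exact aux_cos_nonneg ω L hL hωL hu.1 hu.2

lemma aux_J_neg (ω L : ℝ) (hL : 0 < L) (hωL : ω * L = Real.pi)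
    (g : ℝ → ℝ) (hc : ContinuousOn g (Set.Icc 0 L))
    (hm : StrictMonoOn g (Set.Icc 0 L)) :
    (∫ s in (0:ℝ)..L, g s * Real.cos (ω * s)) < 0 := by
  rw [aux_decomp ω L hL hωL g hc]
  simp only [neg_neg, Left.neg_neg_iff]
  apply intervalIntegral.intervalIntegral_pos_of_pos_on
  · apply ContinuousOn.intervalIntegrable_of_Icc (by linarith)
    apply ContinuousOn.mul
    · apply ContinuousOn.sub
      · apply hc.comp (continuous_const.sub continuous_id).continuousOn
        intro x hx
        simp only [Set.mem_Icc, id_eq, Pi.sub_apply] at hx ⊢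
        exact ⟨by linarith [hx.2], by linarith [hx.1]⟩
      · exact hc.mono (Set.Icc_subset_Icc le_rfl (by linarith))
    · exact (Real.continuous_cos.comp (continuous_const.mul continuous_id)).continuousOn
  · intro x hx
    simp only [Set.mem_Ioo] at hx
    apply mul_pos
    · have h1 : x ∈ Set.Icc (0:ℝ) L := ⟨hx.1.le, by linarith [hx.2]⟩
      have h2 : L - x ∈ Set.Icc (0:ℝ) L := ⟨by linarith [hx.2], by linarith [hx.1]⟩
      have := hm h1 h2 (by linarith [hx.2])
      linarith
    · have hω : 0 < ω := by have := Real.pi_pos; nlinarith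
      apply Real.cos_pos_of_mem_Ioo
      constructor
      · have := Real.pi_pos; nlinarith [mul_pos hω hx.1]
      · have : ω * x < ω * (L/2) := by nlinarith [hx.2]
        have h2 : ω * (L/2) = Real.pi / 2 := by rw [← hωL]; ring
        linarith
  · linarith

lemma aux_convex_four (f : ℝ → ℝ) (S : Set ℝ) (h : ConvexOn ℝ S f)
    {a b c d : ℝ} (ha : a ∈ S) (hd : d ∈ S)
    (hab : a ≤ b) (hbd : b ≤ d) (hsum : a + d = b + c) :
    f b + f c ≤ f a + f d := by
  rcases eq_or_lt_of_le (hab.trans hbd) with heq | hlt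
  · have hb : b = a := by linarith
    have hc : c = a := by linarith
    rw [hb, hc, heq]
  · set lam := (d - b) / (d - a) with hlam
    set mu := (d - c) / (d - a) with hmu
    have hda : 0 < d - a := by linarith
    have hac : a ≤ c := by linarith
    have hcd : c ≤ d := by linarith
    have hlam0 : 0 ≤ lam := by apply div_nonneg <;> linarith
    have hlam1 : 0 ≤ 1 - lam := by
      rw [hlam]; rw [sub_nonneg, div_le_one hda]; linarith
    have hmu0 : 0 ≤ mu := by apply div_nonneg <;> linarith
    have hmu1 : 0 ≤ 1 - mu := by
      rw [hmu]; rw [sub_nonneg, div_le_one hda]; linarith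
    have h1 := h.2 ha hd hlam0 hlam1 (by ring)
    have h2 := h.2 ha hd hmu0 hmu1 (by ring)
    have eb : lam • a + (1 - lam) • d = b := by
      simp only [smul_eq_mul, hlam]
      field_simp
      ring
    have ec : mu • a + (1 - mu) • d = c := by
      simp only [smul_eq_mul, hmu]
      field_simp
      ring
    rw [eb] at h1
    rw [ec] at h2
    have hlm : lam + mu = 1 := by
      rw [hlam, hmu, ← add_div, div_eq_one_iff_eq hda.ne']
      linarith
    simp only [smul_eq_mul] at h1 h2
    have e1 : lam * f a + mu * f a = f a := by rw [← add_mul, hlm, one_mul]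
    have e2 : (1 - lam) * f d + (1 - mu) * f d = f d := by
      rw [← add_mul, show (1-lam)+(1-mu) = 1 by linarith, one_mul]
    linarith

/-- for n odd, if G is continuous, strictly increasing and convex on
[0, nT_v/2], then A_n = ∫₀^{nT_v/2} G(t) cos(ω₀ t) dt < 0. -/
theorem combDrive_An_neg_odd (Tv ω₀ : ℝ) (hTv : 0 < Tv) (hω : ω₀ = 2 * Real.pi / Tv)
    (n : ℕ) (hn : 0 < n) (hodd : Odd n)
    (G : ℝ → ℝ)
    (hcont : ContinuousOn G (Set.Icc 0 ((n : ℝ) * Tv / 2)))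
    (hmono : StrictMonoOn G (Set.Icc 0 ((n : ℝ) * Tv / 2)))
    (hconv : ConvexOn ℝ (Set.Icc 0 ((n : ℝ) * Tv / 2)) G) :
    (∫ t in (0 : ℝ)..((n : ℝ) * Tv / 2), G t * Real.cos (ω₀ * t)) < 0 := by
  set L : ℝ := Tv / 2 with hLdef
  have hL : 0 < L := by positivity
  have hωL : ω₀ * L = Real.pi := by
    rw [hω, hLdef]
    field_simp
  have hM : (n : ℝ) * Tv / 2 = (n : ℝ) * L := by rw [hLdef]; ring
  rw [hM] at hcont hmono hconv ⊢
  have hnL : L ≤ (n : ℝ) * L := by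
    have : (1 : ℝ) ≤ (n : ℝ) := by exact_mod_cast hn
    nlinarith
  -- continuity of the full integrand
  have hf : ContinuousOn (fun t => G t * Real.cos (ω₀ * t)) (Set.Icc 0 ((n:ℝ)*L)) :=
    hcont.mul (Real.continuous_cos.comp (continuous_const.mul continuous_id)).continuousOn
  -- shifted integrals
  set J : ℕ → ℝ := fun k => ∫ s in (0:ℝ)..L, G (s + (k:ℝ)*L) * Real.cos (ω₀ * s) with hJ
  -- shifted continuity
  have hshift : ∀ k : ℕ, (k:ℝ) + 1 ≤ (n:ℝ) →
      ContinuousOn (fun s => G (s + (k:ℝ)*L)) (Set.Icc 0 L) := by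
    intro k hk
    apply hcont.comp (continuous_id.add continuous_const).continuousOn
    intro x hx
    simp only [Set.mem_Icc, id_eq, Pi.add_apply] at hx ⊢
    constructor
    · have : 0 ≤ (k:ℝ) * L := by positivity
      linarith [hx.1]
    · nlinarith [hx.2]
  -- step 1: split the integral
  have hint : ∀ k < n, IntervalIntegrable (fun t => G t * Real.cos (ω₀ * t)) volume
      ((fun k : ℕ => (k:ℝ)*L) k) ((fun k : ℕ => (k:ℝ)*L) (k+1)) := by
    intro k hk
    apply ContinuousOn.intervalIntegrable_of_Icc
    · push_cast; nlinarith
    · apply hf.mono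
      apply Set.Icc_subset_Icc
      · positivity
      · push_cast
        have : (k:ℝ) + 1 ≤ (n:ℝ) := by exact_mod_cast hk
        nlinarith
  have hsplit := intervalIntegral.sum_integral_adjacent_intervals hint
  simp only [Nat.cast_zero, zero_mul] at hsplit
  rw [← hsplit]
  -- step 2: each piece equals (-1)^k * J k
  have step2 : ∀ k < n, (∫ t in ((k:ℝ)*L)..(((k:ℕ)+1:ℕ):ℝ)*L, G t * Real.cos (ω₀ * t))
      = (-1:ℝ)^k * J k := by
    intro k hk
    have h := intervalIntegral.integral_comp_add_right (a := (0:ℝ)) (b := L)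
      (fun t => G t * Real.cos (ω₀ * t)) ((k:ℝ)*L)
    rw [zero_add, show L + (k:ℝ)*L = (((k:ℕ)+1:ℕ):ℝ)*L by push_cast; ring] at h
    rw [← h]
    have : (∫ x in (0:ℝ)..L, G (x + (k:ℝ)*L) * Real.cos (ω₀ * (x + (k:ℝ)*L)))
        = ∫ x in (0:ℝ)..L, (-1:ℝ)^k * (G (x + (k:ℝ)*L) * Real.cos (ω₀ * x)) := by
      apply intervalIntegral.integral_congr
      intro x _
      have : ω₀ * (x + (k:ℝ)*L) = ω₀ * x + (k:ℕ) * Real.pi := by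
        rw [← hωL]; ring
      simp only [this, Real.cos_add_nat_mul_pi]
      ring
    rw [this, intervalIntegral.integral_const_mul]
  rw [Finset.sum_congr rfl (fun k hk => step2 k (Finset.mem_range.mp hk))]
  -- step 3: regroup the alternating sum, n = 2m+1
  obtain ⟨m, hm⟩ := hodd
  subst hm
  have regroup : ∀ M : ℕ, (∑ k ∈ Finset.range (2*M+1), (-1:ℝ)^k * J k)
      = J 0 + ∑ j ∈ Finset.range M, (J (2*j+2) - J (2*j+1)) := by
    intro M
    induction M with
    | zero => simp
    | succ p ih =>
      rw [show 2*(p+1)+1 = (2*p+1) + 1 + 1 by ring, Finset.sum_range_succ,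
        Finset.sum_range_succ, ih, Finset.sum_range_succ]
      rw [show (2*p+1)+1 = 2*p+2 by ring]
      have h1 : (-1:ℝ)^(2*p+1) = -1 := by
        rw [pow_succ, pow_mul]; norm_num
      have h2 : (-1:ℝ)^(2*p+2) = 1 := by
        rw [show 2*p+2 = 2*(p+1) by ring, pow_mul]; norm_num
      rw [h1, h2]
      ring
  rw [regroup m]
  -- step 4: J 0 < 0
  have hJ0 : J 0 < 0 := by
    have : J 0 = ∫ s in (0:ℝ)..L, G s * Real.cos (ω₀ * s) := by
      simp [hJ]
    rw [this]
    exact aux_J_neg ω₀ L hL hωL G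
      (hcont.mono (Set.Icc_subset_Icc le_rfl hnL))
      (hmono.mono (Set.Icc_subset_Icc le_rfl hnL))
  -- step 5: each pair term ≤ 0
  have hpair : ∀ j < m, J (2*j+2) - J (2*j+1) ≤ 0 := by
    intro j hj
    have hj2 : ((2*j+2:ℕ):ℝ) + 1 ≤ ((2*m+1:ℕ):ℝ) := by
      push_cast
      have : (j:ℝ) + 1 ≤ (m:ℝ) := by exact_mod_cast hj
      linarith
    have hj1 : ((2*j+1:ℕ):ℝ) + 1 ≤ ((2*m+1:ℕ):ℝ) := by push_cast at hj2 ⊢; linarith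
    have hc2 := hshift (2*j+2) hj2
    have hc1 := hshift (2*j+1) hj1
    have hccos : ContinuousOn (fun s => Real.cos (ω₀ * s)) (Set.Icc 0 L) :=
      (Real.continuous_cos.comp (continuous_const.mul continuous_id)).continuousOn
    have hI2 : IntervalIntegrable (fun s => G (s + ((2*j+2:ℕ):ℝ)*L) * Real.cos (ω₀ * s))
        volume 0 L := (hc2.mul hccos).intervalIntegrable_of_Icc hL.le
    have hI1 : IntervalIntegrable (fun s => G (s + ((2*j+1:ℕ):ℝ)*L) * Real.cos (ω₀ * s))
        volume 0 L := (hc1.mul hccos).intervalIntegrable_of_Icc hL.le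
    have hdiff : J (2*j+2) - J (2*j+1)
        = ∫ s in (0:ℝ)..L, (G (s + ((2*j+2:ℕ):ℝ)*L) - G (s + ((2*j+1:ℕ):ℝ)*L))
            * Real.cos (ω₀ * s) := by
      rw [hJ]
      rw [← intervalIntegral.integral_sub hI2 hI1]
      apply intervalIntegral.integral_congr
      intro s _
      ring
    rw [hdiff]
    apply aux_J_nonpos ω₀ L hL hωL _ (hc2.sub hc1)
    -- monotonicity via convexity
    intro s hs t ht hst
    simp only [Set.mem_Icc] at hs ht
    have hcast : ((2*j+2:ℕ):ℝ) = ((2*j+1:ℕ):ℝ) + 1 := by push_cast; ring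
    have key := aux_convex_four G (Set.Icc 0 (((2*m+1:ℕ):ℝ)*L)) hconv
      (a := s + ((2*j+1:ℕ):ℝ)*L) (b := t + ((2*j+1:ℕ):ℝ)*L)
      (c := s + ((2*j+2:ℕ):ℝ)*L) (d := t + ((2*j+2:ℕ):ℝ)*L)
      ?_ ?_ (by linarith) (by rw [hcast]; nlinarith [ht.1]) (by ring)
    · simp only [Pi.sub_apply]; linarith
    · constructor
      · have : 0 ≤ ((2*j+1:ℕ):ℝ)*L := by positivity
        linarith [hs.1]
      · push_cast at hj1 ⊢
        nlinarith [hs.2]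
    · constructor
      · have : 0 ≤ ((2*j+2:ℕ):ℝ)*L := by positivity
        linarith [ht.1]
      · push_cast at hj2 ⊢
        nlinarith [ht.2]
  have hsum : (∑ j ∈ Finset.range m, (J (2*j+2) - J (2*j+1))) ≤ 0 :=
    Finset.sum_nonpos (fun j hj => hpair j (Finset.mem_range.mp hj))
  linarith
end

section
/- Let T_v > 0, ω₀ = 2π/T_v, and let n be an even positive integer. Let G : ℝ → ℝ be continuous on [0, n·T_v/2], monotonically increasing on [0, n·T_v/2], and strictly convex on [0, n·T_v/2]. Then ∫₀^{n·T_v/2} G(t)·cos(ω₀ t) dt > 0. -/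
set_option maxHeartbeats 1000000


lemma conv4 {s : Set ℝ} {f : ℝ → ℝ} (h : StrictConvexOn ℝ s f)
    {x1 x2 x3 x4 : ℝ} (h1 : x1 ∈ s) (h4 : x4 ∈ s)
    (h12 : x1 < x2) (h23 : x2 ≤ x3) (h34 : x3 < x4)
    (hsum : x1 + x4 = x2 + x3) :
    f x2 + f x3 < f x1 + f x4 := by
  have h14 : x1 < x4 := lt_of_lt_of_le h12 (le_trans h23 h34.le)
  have hd : (0:ℝ) < x4 - x1 := by linarith
  set lam := (x4 - x2) / (x4 - x1) with hlam
  have hl0 : 0 < lam := div_pos (by linarith) hd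
  have hl1 : lam < 1 := (div_lt_one hd).2 (by linarith)
  have hx2 : lam * x1 + (1 - lam) * x4 = x2 := by
    rw [hlam, div_mul_eq_mul_div, one_sub_div hd.ne', div_mul_eq_mul_div, ← add_div,
      div_eq_iff hd.ne']; ring
  have hx3 : (1 - lam) * x1 + lam * x4 = x3 := by
    field_simp [hlam]; ring_nf; nlinarith [hsum]
  have A := h.2 h1 h4 (ne_of_lt h14) hl0 (by linarith : (0:ℝ) < 1 - lam) (by ring)
  have B := h.2 h1 h4 (ne_of_lt h14) (by linarith : (0:ℝ) < 1 - lam) hl0 (by ring)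
  simp only [smul_eq_mul] at A B
  rw [hx2] at A; rw [hx3] at B
  linarith

lemma base_pos (Tv : ℝ) (hTv : 0 < Tv) (g : ℝ → ℝ)
    (hc : ContinuousOn g (Set.Icc 0 Tv))
    (hconv : StrictConvexOn ℝ (Set.Icc 0 Tv) g) :
    0 < ∫ s in (0:ℝ)..Tv, g s * Real.cos (2 * Real.pi / Tv * s) := by
  set ω := 2 * Real.pi / Tv with hω
  set q := Tv / 4 with hq
  have hq0 : 0 < q := by positivity
  have hωq : ω * q = Real.pi / 2 := by rw [hω, hq]; field_simp; ring
  have hTv4 : Tv = 4 * q := by rw [hq]; ring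
  -- continuity of the integrand
  have hcos : Continuous fun s : ℝ => Real.cos (ω * s) :=
    Real.continuous_cos.comp (continuous_const.mul continuous_id)
  have hf : ContinuousOn (fun s => g s * Real.cos (ω * s)) (Set.Icc 0 Tv) :=
    hc.mul hcos.continuousOn
  have hint : ∀ a b : ℝ, 0 ≤ a → a ≤ b → b ≤ Tv →
      IntervalIntegrable (fun s => g s * Real.cos (ω * s)) MeasureTheory.volume a b := by
    intro a b ha hab hb
    apply (hf.mono ?_).intervalIntegrable
    rw [Set.uIcc_of_le hab]
    exact Set.Icc_subset_Icc ha hb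
  -- split into quarters
  have hsplit : (∫ s in (0:ℝ)..Tv, g s * Real.cos (ω * s)) =
      (∫ s in (0:ℝ)..q, g s * Real.cos (ω * s)) +
      (∫ s in q..(2*q), g s * Real.cos (ω * s)) +
      (∫ s in (2*q)..(3*q), g s * Real.cos (ω * s)) +
      (∫ s in (3*q)..(4*q), g s * Real.cos (ω * s)) := by
    rw [intervalIntegral.integral_add_adjacent_intervals (hint 0 q (le_refl 0) hq0.le (by linarith [hTv4, hq0]))
        (hint q (2*q) hq0.le (by linarith) (by linarith [hTv4])),
      intervalIntegral.integral_add_adjacent_intervals (hint 0 (2*q) (le_refl 0) (by linarith) (by linarith [hTv4]))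
        (hint (2*q) (3*q) (by linarith) (by linarith) (by linarith [hTv4])),
      intervalIntegral.integral_add_adjacent_intervals (hint 0 (3*q) (le_refl 0) (by linarith) (by linarith [hTv4]))
        (hint (3*q) (4*q) (by linarith) (by linarith) (by linarith [hTv4]))]
    rw [hTv4]
  -- substitutions
  have e2 : (∫ s in q..(2*q), g s * Real.cos (ω * s)) =
      ∫ u in (0:ℝ)..q, -(g (2*q - u) * Real.cos (ω * u)) := by
    have h0 := intervalIntegral.integral_comp_sub_left (a := 0) (b := q)
      (fun s => g s * Real.cos (ω * s)) (2*q)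
    have : (2*q - q) = q := by ring
    rw [this, sub_zero] at h0
    rw [← h0]
    apply intervalIntegral.integral_congr
    intro u _
    have hcoseq : Real.cos (ω * (2*q - u)) = -Real.cos (ω * u) := by
      have : ω * (2*q - u) = Real.pi - ω * u := by
        have : ω * (2*q) = Real.pi := by rw [show ω * (2*q) = 2 * (ω*q) by ring, hωq]; ring
        nlinarith [this]
      rw [this, Real.cos_pi_sub]
    simp [hcoseq]
  have e3 : (∫ s in (2*q)..(3*q), g s * Real.cos (ω * s)) =
      ∫ u in (0:ℝ)..q, -(g (2*q + u) * Real.cos (ω * u)) := by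
    have h0 := intervalIntegral.integral_comp_add_left (a := 0) (b := q)
      (fun s => g s * Real.cos (ω * s)) (2*q)
    rw [add_zero, show (2*q + q) = 3*q by ring] at h0
    rw [← h0]
    apply intervalIntegral.integral_congr
    intro u _
    have hcoseq : Real.cos (ω * (2*q + u)) = -Real.cos (ω * u) := by
      have h1 : ω * (2*q + u) = ω * u + Real.pi := by
        have : ω * (2*q) = Real.pi := by rw [show ω * (2*q) = 2 * (ω*q) by ring, hωq]; ring
        nlinarith [this]
      rw [h1, Real.cos_add_pi]
    simp [hcoseq]
  have e4 : (∫ s in (3*q)..(4*q), g s * Real.cos (ω * s)) =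
      ∫ u in (0:ℝ)..q, g (4*q - u) * Real.cos (ω * u) := by
    have h0 := intervalIntegral.integral_comp_sub_left (a := 0) (b := q)
      (fun s => g s * Real.cos (ω * s)) (4*q)
    rw [sub_zero, show (4*q - q) = 3*q by ring] at h0
    rw [← h0]
    apply intervalIntegral.integral_congr
    intro u _
    have hcoseq : Real.cos (ω * (4*q - u)) = Real.cos (ω * u) := by
      have h1 : ω * (4*q - u) = 2 * Real.pi - ω * u := by
        have : ω * (4*q) = 2 * Real.pi := by rw [show ω * (4*q) = 4 * (ω*q) by ring, hωq]; ring
        nlinarith [this]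
      rw [h1, Real.cos_sub, Real.cos_two_pi, Real.sin_two_pi]; ring
    simp [hcoseq]
  -- integrabilities of the folded pieces
  have hintg : ∀ c : ℝ, (∀ u ∈ Set.Icc (0:ℝ) q, c - u ∈ Set.Icc 0 Tv) →
      IntervalIntegrable (fun u => g (c - u) * Real.cos (ω * u)) MeasureTheory.volume 0 q := by
    intro c hmaps
    apply ContinuousOn.intervalIntegrable
    rw [Set.uIcc_of_le hq0.le]
    exact ((hc.comp (continuous_const.sub continuous_id).continuousOn hmaps).mul
      hcos.continuousOn)
  have hmaps3 : Set.MapsTo (fun u : ℝ => 2*q + u) (Set.Icc 0 q) (Set.Icc 0 Tv) := by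
    intro u hu
    simp only [Set.mem_Icc] at hu ⊢
    constructor <;> linarith [hu.1, hu.2, hq0, hTv4]
  have hcont3 : ContinuousOn (fun u : ℝ => g (2*q + u)) (Set.Icc 0 q) :=
    hc.comp (by fun_prop : Continuous fun u : ℝ => 2*q + u).continuousOn hmaps3
  have hintg' : IntervalIntegrable (fun u => g (2*q + u) * Real.cos (ω * u)) MeasureTheory.volume 0 q := by
    apply ContinuousOn.intervalIntegrable
    rw [Set.uIcc_of_le hq0.le]
    exact hcont3.mul hcos.continuousOn
  have hint1 : IntervalIntegrable (fun u => g u * Real.cos (ω * u)) MeasureTheory.volume 0 q :=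
    hint 0 q le_rfl hq0.le (by linarith [hTv4])
  have hint2 : IntervalIntegrable (fun u => g (2*q - u) * Real.cos (ω * u)) MeasureTheory.volume 0 q := by
    apply hintg; intro u hu; simp only [Set.mem_Icc] at hu ⊢; constructor <;> linarith [hu.1, hu.2, hq0, hTv4]
  have hint4 : IntervalIntegrable (fun u => g (4*q - u) * Real.cos (ω * u)) MeasureTheory.volume 0 q := by
    apply hintg; intro u hu; simp only [Set.mem_Icc] at hu ⊢; constructor <;> linarith [hu.1, hu.2, hq0, hTv4]
  rw [hsplit, e2, e3, e4, intervalIntegral.integral_neg, intervalIntegral.integral_neg]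
  have hcomb : (∫ s in (0:ℝ)..q, g s * Real.cos (ω * s)) -
      (∫ u in (0:ℝ)..q, g (2*q - u) * Real.cos (ω * u)) -
      (∫ u in (0:ℝ)..q, g (2*q + u) * Real.cos (ω * u)) +
      (∫ u in (0:ℝ)..q, g (4*q - u) * Real.cos (ω * u)) =
      ∫ u in (0:ℝ)..q, (g u - g (2*q - u) - g (2*q + u) + g (4*q - u)) * Real.cos (ω * u) := by
    rw [← intervalIntegral.integral_sub hint1 hint2,
        ← intervalIntegral.integral_sub (hint1.sub hint2) hintg',
        ← intervalIntegral.integral_add ((hint1.sub hint2).sub hintg') hint4]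
    apply intervalIntegral.integral_congr
    intro u _; ring
  have : (∫ s in (0:ℝ)..q, g s * Real.cos (ω * s)) +
      -(∫ u in (0:ℝ)..q, g (2*q - u) * Real.cos (ω * u)) +
      -(∫ u in (0:ℝ)..q, g (2*q + u) * Real.cos (ω * u)) +
      (∫ u in (0:ℝ)..q, g (4*q - u) * Real.cos (ω * u)) =
      ∫ u in (0:ℝ)..q, (g u - g (2*q - u) - g (2*q + u) + g (4*q - u)) * Real.cos (ω * u) := by
    rw [← hcomb]; ring
  rw [this]
  have hm2 : Set.MapsTo (fun u : ℝ => 2*q - u) (Set.Icc 0 q) (Set.Icc 0 Tv) := by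
    intro u hu; simp only [Set.mem_Icc] at hu ⊢; constructor <;> linarith [hu.1, hu.2, hq0, hTv4]
  have hm4 : Set.MapsTo (fun u : ℝ => 4*q - u) (Set.Icc 0 q) (Set.Icc 0 Tv) := by
    intro u hu; simp only [Set.mem_Icc] at hu ⊢; constructor <;> linarith [hu.1, hu.2, hq0, hTv4]
  have hm1 : Set.MapsTo (fun u : ℝ => u) (Set.Icc 0 q) (Set.Icc 0 Tv) := by
    intro u hu; simp only [Set.mem_Icc] at hu ⊢; constructor <;> linarith [hu.1, hu.2, hq0, hTv4]
  have hψ : ContinuousOn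
      (fun u => (g u - g (2*q - u) - g (2*q + u) + g (4*q - u)) * Real.cos (ω * u))
      (Set.Icc 0 q) := by
    refine ContinuousOn.mul ?_ hcos.continuousOn
    exact (((hc.comp continuous_id.continuousOn hm1).sub
      (hc.comp (by fun_prop : Continuous fun u : ℝ => 2*q - u).continuousOn hm2)).sub
      hcont3).add (hc.comp (by fun_prop : Continuous fun u : ℝ => 4*q - u).continuousOn hm4)
  have hω0 : 0 < ω := by rw [hω]; positivity
  apply intervalIntegral.intervalIntegral_pos_of_pos_on
  · apply ContinuousOn.intervalIntegrable
    rw [Set.uIcc_of_le hq0.le]; exact hψ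
  · intro u hu
    obtain ⟨hu0, huq⟩ := hu
    have hmem1 : u ∈ Set.Icc (0:ℝ) Tv := by
      constructor <;> linarith [hTv4]
    have hmem4 : 4*q - u ∈ Set.Icc (0:ℝ) Tv := by
      constructor <;> linarith [hTv4]
    have hkey := conv4 hconv hmem1 hmem4 (by linarith : u < 2*q - u)
      (by linarith : 2*q - u ≤ 2*q + u) (by linarith : 2*q + u < 4*q - u) (by ring)
    have hcospos : 0 < Real.cos (ω * u) := by
      apply Real.cos_pos_of_mem_Ioo
      constructor
      · nlinarith [Real.pi_pos, mul_pos hω0 hu0]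
      · nlinarith [mul_lt_mul_of_pos_left huq hω0]
    exact mul_pos (by linarith) hcospos
  · exact hq0

lemma strictConvexOn_shift {s : Set ℝ} {f : ℝ → ℝ} (h : StrictConvexOn ℝ s f) (a : ℝ)
    {t : Set ℝ} (ht : Convex ℝ t) (hm : ∀ x ∈ t, a + x ∈ s) :
    StrictConvexOn ℝ t (fun x => f (a + x)) := by
  refine ⟨ht, ?_⟩
  intro x hx y hy hxy p q hp hq hpq
  have key := h.2 (hm x hx) (hm y hy) (by intro hc; exact hxy (by linarith)) hp hq hpq
  simp only [smul_eq_mul] at key ⊢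
  have e : a + (p*x + q*y) = p*(a+x) + q*(a+y) := by
    have : p*(a+x) + q*(a+y) = (p+q)*a + (p*x + q*y) := by ring
    rw [this, hpq, one_mul]
  rw [e]
  exact key



/-- for n even, if G is continuous, increasing and strictly convex on
[0, nT_v/2], then A_n = ∫₀^{nT_v/2} G(t) cos(ω₀ t) dt > 0. -/
theorem combDrive_An_pos_even (Tv ω₀ : ℝ) (hTv : 0 < Tv) (hω : ω₀ = 2 * Real.pi / Tv)
    (n : ℕ) (hn : 0 < n) (heven : Even n)
    (G : ℝ → ℝ)
    (hcont : ContinuousOn G (Set.Icc 0 ((n : ℝ) * Tv / 2)))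
    (hmono : MonotoneOn G (Set.Icc 0 ((n : ℝ) * Tv / 2)))
    (hconv : StrictConvexOn ℝ (Set.Icc 0 ((n : ℝ) * Tv / 2)) G) :
    (∫ t in (0 : ℝ)..((n : ℝ) * Tv / 2), G t * Real.cos (ω₀ * t)) > 0 := by
  obtain ⟨m, hm⟩ := heven
  have hm0 : 0 < m := by omega
  have hL : (n : ℝ) * Tv / 2 = (m : ℝ) * Tv := by
    subst hm; push_cast; ring
  rw [hL] at hcont hconv ⊢
  clear hmono hn hm
  have hcosC : Continuous fun t : ℝ => Real.cos (ω₀ * t) := by fun_prop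
  have hfC : ContinuousOn (fun t => G t * Real.cos (ω₀ * t)) (Set.Icc 0 ((m:ℝ)*Tv)) :=
    hcont.mul hcosC.continuousOn
  set a : ℕ → ℝ := fun k => (k : ℝ) * Tv with ha
  have hmono' : ∀ k, k ≤ m → a k ∈ Set.Icc (0:ℝ) ((m:ℝ)*Tv) := by
    intro k hk
    constructor
    · positivity
    · apply mul_le_mul_of_nonneg_right _ hTv.le
      exact_mod_cast hk
  have hintk : ∀ k < m, IntervalIntegrable (fun t => G t * Real.cos (ω₀ * t))
      MeasureTheory.volume (a k) (a (k+1)) := by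
    intro k hk
    apply ContinuousOn.intervalIntegrable
    have hle : a k ≤ a (k+1) := by
      apply mul_le_mul_of_nonneg_right _ hTv.le
      exact_mod_cast Nat.le_succ k
    rw [Set.uIcc_of_le hle]
    apply hfC.mono
    exact Set.Icc_subset_Icc (hmono' k hk.le).1 (hmono' (k+1) hk).2
  have hsum := intervalIntegral.sum_integral_adjacent_intervals (μ := MeasureTheory.volume)
    (f := fun t => G t * Real.cos (ω₀ * t)) hintk
  have ha0 : a 0 = 0 := by simp [ha]
  have ham : a m = (m:ℝ)*Tv := rfl
  rw [ha0, ham] at hsum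
  rw [← hsum]
  apply Finset.sum_pos _ (by simp [Finset.nonempty_range_iff]; omega)
  intro k hk
  rw [Finset.mem_range] at hk
  -- per-period positivity
  have hstep : a (k+1) = a k + Tv := by simp only [ha]; push_cast; ring
  have h0 := intervalIntegral.integral_comp_add_left (a := 0) (b := Tv)
    (fun t => G t * Real.cos (ω₀ * t)) (a k)
  rw [add_zero] at h0
  rw [hstep, ← h0]
  have hcoseq : ∀ s : ℝ, Real.cos (ω₀ * (a k + s)) = Real.cos (2 * Real.pi / Tv * s) := by
    intro s
    have : ω₀ * (a k + s) = 2 * Real.pi / Tv * s + (k : ℤ) * (2 * Real.pi) := by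
      rw [hω, ha]
      push_cast
      field_simp
      ring
    rw [this, Real.cos_add_int_mul_two_pi]
  have hE : (∫ s in (0:ℝ)..Tv, (fun t => G t * Real.cos (ω₀ * t)) (a k + s)) =
      ∫ s in (0:ℝ)..Tv, G (a k + s) * Real.cos (2 * Real.pi / Tv * s) := by
    apply intervalIntegral.integral_congr
    intro s _
    simp only [hcoseq]
  rw [hE]
  -- apply base_pos to the shifted function
  have hmaps : ∀ x ∈ Set.Icc (0:ℝ) Tv, a k + x ∈ Set.Icc 0 ((m:ℝ)*Tv) := by
    intro x hx
    obtain ⟨hx0, hxT⟩ := hx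
    have h1 : (0:ℝ) ≤ a k := (hmono' k hk.le).1
    have h2 : a k + Tv ≤ (m:ℝ)*Tv := by
      rw [← hstep]; exact (hmono' (k+1) hk).2
    constructor <;> linarith
  apply base_pos Tv hTv _ (hcont.comp (by fun_prop : Continuous fun x : ℝ => a k + x).continuousOn hmaps)
  exact strictConvexOn_shift hconv (a k) (convex_Icc _ _) hmaps
end
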